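/- arXiv:1010.1402 — 7 statements merged into one kernel-verified Lean document; each statement's English description precedes it below -/
import Mathlib

section
/- (Result 1, distributional form.) Let B : Matrix (Fin T) (Fin T) ℝ have acyclic support, σ² : Fin T → ℝ with σ² t > 0 for all t, D = Matrix.diagonal σ², Ω = (1 − B)ᵀ * D⁻¹ * (1 − B), and μ ∈ ℝ^T. Let ν be the Gaussian measure on EuclideanSpace ℝ (Fin T) with mean 0 and covariance D (the law of T independent centered Gaussians with variances σ² t). Then the pushforward of ν under the affine map ε ↦ (1 − B)⁻¹ * μ + (1 − B)⁻¹ * ε equals the multivariate Gaussian measure with mean (1 − B)⁻¹ * μ and covariance matrix Ω⁻¹. In particular Ω⁻¹ = (1 − B)⁻¹ * D * ((1 − B)⁻¹)ᵀ. -/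
open Matrix MeasureTheory Real

/-- `B` has acyclic support: the digraph with an edge `v → t` whenever `B t v ≠ 0`
has no directed cycle. -/
def HasAcyclicSupport {T : ℕ} (B : Matrix (Fin T) (Fin T) ℝ) : Prop :=
  ∀ v : Fin T, ¬ Relation.TransGen (fun v t : Fin T => B t v ≠ 0) v v

/-- The multivariate Gaussian density on `ℝ^T` with mean `m` and covariance matrix `S`. -/
noncomputable def gaussianDensity {T : ℕ} (m : Fin T → ℝ) (S : Matrix (Fin T) (Fin T) ℝ)
    (y : Fin T → ℝ) : ℝ :=
  (2 * π) ^ (-(T : ℝ) / 2) * S.det ^ (-(1 : ℝ) / 2) *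
    Real.exp (-((y - m) ⬝ᵥ (S⁻¹ *ᵥ (y - m))) / 2)

/-- The multivariate Gaussian measure on `EuclideanSpace ℝ (Fin T)` with mean `m` and
covariance matrix `S`, given by its density with respect to Lebesgue measure. -/
noncomputable def gaussianMeasure {T : ℕ} (m : Fin T → ℝ) (S : Matrix (Fin T) (Fin T) ℝ) :
    Measure (EuclideanSpace ℝ (Fin T)) :=
  volume.withDensity fun y => ENNReal.ofReal (gaussianDensity m S (fun i => y i))

/- ### Auxiliary lemmas -/

lemma aux_path_of_pow {T k : ℕ} {B : Matrix (Fin T) (Fin T) ℝ} {t v : Fin T}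
    (h : (B ^ k) t v ≠ 0) :
    ∃ f : ℕ → Fin T, f 0 = v ∧ f k = t ∧ ∀ i < k, B (f (i+1)) (f i) ≠ 0 := by
  induction k generalizing t with
  | zero =>
    have htv : t = v := by
      by_contra hne
      rw [pow_zero, Matrix.one_apply_ne hne] at h
      exact h rfl
    subst htv
    exact ⟨fun _ => t, rfl, rfl, by omega⟩
  | succ k ih =>
    rw [pow_succ'] at h
    have : ∃ u, B t u * (B ^ k) u v ≠ 0 := by
      by_contra hc
      push_neg at hc
      simp [Matrix.mul_apply, hc] at h
    obtain ⟨u, hu⟩ := this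
    have h1 : B t u ≠ 0 := fun hz => hu (by simp [hz])
    have h2 : (B ^ k) u v ≠ 0 := fun hz => hu (by simp [hz])
    obtain ⟨f, hf0, hfk, hfe⟩ := ih h2
    refine ⟨fun i => if i ≤ k then f i else t, by simp [hf0], by simp, ?_⟩
    intro i hi
    rcases Nat.lt_or_ge i k with h' | h'
    · simpa [Nat.le_of_lt h', Nat.succ_le_of_lt h'] using hfe i h'
    · have : i = k := by omega
      subst this
      simpa [hfk] using h1

lemma aux_nilpotent_of_acyclic {T : ℕ} (B : Matrix (Fin T) (Fin T) ℝ)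
    (hacyc : HasAcyclicSupport B) : B ^ T = 0 := by
  ext t v
  by_contra h
  obtain ⟨f, hf0, hfk, hfe⟩ := aux_path_of_pow h
  have chain : ∀ i j, i < j → j ≤ T →
      Relation.TransGen (fun v t : Fin T => B t v ≠ 0) (f i) (f j) := by
    intro i j hij hjT
    induction j with
    | zero => omega
    | succ j ihj =>
      rcases Nat.lt_or_ge i j with h' | h'
      · exact (ihj h' (by omega)).tail (hfe j (by omega))
      · have : i = j := by omega
        subst this
        exact Relation.TransGen.single (hfe i (by omega))
  have hninj : ¬ Function.Injective (fun i : Fin (T+1) => f i) := by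
    intro hinj
    have := Fintype.card_le_of_injective _ hinj
    simp at this
  rw [Function.not_injective_iff] at hninj
  obtain ⟨i, j, hfij, hij⟩ := hninj
  rcases lt_or_gt_of_ne hij with h' | h'
  · have hc := chain i j h' (Nat.lt_succ_iff.mp j.isLt)
    rw [hfij] at hc
    exact hacyc _ hc
  · have hc := chain j i h' (Nat.lt_succ_iff.mp i.isLt)
    rw [← hfij] at hc
    exact hacyc _ hc

lemma aux_map_withDensity_equiv {α β : Type*} [MeasurableSpace α] [MeasurableSpace β]
    (e : α ≃ᵐ β) (μ : Measure α) (g : β → ENNReal) (hg : Measurable g) :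
    (μ.withDensity (fun x => g (e x))).map e = (μ.map e).withDensity g := by
  ext s hs
  rw [Measure.map_apply e.measurable hs, withDensity_apply _ (e.measurable hs),
    withDensity_apply _ hs, ← setLIntegral_map hs hg e.measurable]

lemma aux_measurable_mulVec {T : ℕ} (M : Matrix (Fin T) (Fin T) ℝ) :
    Measurable (fun x : Fin T → ℝ => M *ᵥ x) := by
  have : (fun x : Fin T → ℝ => M *ᵥ x) = Matrix.toLin' M := by
    funext x; simp [Matrix.toLin'_apply]
  rw [this]
  exact (LinearMap.continuous_on_pi _).measurable

lemma aux_measurable_gaussianDensity {T : ℕ} (m : Fin T → ℝ) (S : Matrix (Fin T) (Fin T) ℝ) :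
    Measurable (fun y : Fin T → ℝ => ENNReal.ofReal (gaussianDensity m S y)) := by
  apply ENNReal.measurable_ofReal.comp
  unfold gaussianDensity
  apply Measurable.const_mul
  apply Measurable.comp Real.measurable_exp
  apply Measurable.div_const
  apply Measurable.neg
  simp only [dotProduct]
  apply Finset.measurable_sum
  intro i _
  exact ((measurable_pi_apply i).sub measurable_const).mul
    ((aux_measurable_mulVec _).comp ((measurable_id.sub measurable_const)) |>.eval)

lemma aux_map_affine_volume {T : ℕ} (A : Matrix (Fin T) (Fin T) ℝ) (hA : A.det ≠ 0)
    (c : Fin T → ℝ) :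
    Measure.map (fun ε : Fin T → ℝ => c + A *ᵥ ε) volume
      = ENNReal.ofReal |A.det⁻¹| • volume := by
  have h1 : (fun ε : Fin T → ℝ => c + A *ᵥ ε)
      = (fun x : Fin T → ℝ => c + x) ∘ (Matrix.toLin' A) := by
    funext ε; simp [Matrix.toLin'_apply]
  rw [h1, ← Measure.map_map (measurable_const_add c)
    (LinearMap.continuous_on_pi _).measurable,
    Real.map_matrix_volume_pi_eq_smul_volume_pi hA, Measure.map_smul,
    MeasureTheory.map_add_left_eq_self volume c]

/-- The affine measurable equivalence `ε ↦ m + A⁻¹ ε`. -/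
noncomputable def affEquiv {T : ℕ} (A : Matrix (Fin T) (Fin T) ℝ) (hA : IsUnit A.det)
    (m : Fin T → ℝ) : (Fin T → ℝ) ≃ᵐ (Fin T → ℝ) where
  toFun := fun ε => m + A⁻¹ *ᵥ ε
  invFun := fun y => A *ᵥ (y - m)
  left_inv := fun ε => by
    simp [Matrix.mulVec_mulVec, Matrix.mul_nonsing_inv A hA]
  right_inv := fun y => by
    simp [Matrix.mulVec_mulVec, Matrix.nonsing_inv_mul A hA]
  measurable_toFun := measurable_const.add (aux_measurable_mulVec _)
  measurable_invFun := (aux_measurable_mulVec _).comp (measurable_id.sub measurable_const)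

/-- Result 1 (distributional form): if `B` has acyclic support, `D = diagonal σ²` with
`σ² t > 0`, `Ω = (1 - B)ᵀ * D⁻¹ * (1 - B)` and `ν` is the Gaussian measure with mean `0`
and covariance `D` (the law of `T` independent centered Gaussians with variances `σ² t`),
then the pushforward of `ν` under `ε ↦ (1 - B)⁻¹ *ᵥ μ + (1 - B)⁻¹ *ᵥ ε` is the
multivariate Gaussian with mean `(1 - B)⁻¹ *ᵥ μ` and covariance `Ω⁻¹`; in particular
`Ω⁻¹ = (1 - B)⁻¹ * D * ((1 - B)⁻¹)ᵀ`. -/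
theorem stmt_7 (T : ℕ) (hT : 0 < T) (B : Matrix (Fin T) (Fin T) ℝ)
    (hacyc : HasAcyclicSupport B)
    (σ2 : Fin T → ℝ) (hσ2 : ∀ t, 0 < σ2 t)
    (D : Matrix (Fin T) (Fin T) ℝ) (hD : D = Matrix.diagonal σ2)
    (Ω : Matrix (Fin T) (Fin T) ℝ) (hΩ : Ω = (1 - B)ᵀ * D⁻¹ * (1 - B))
    (μ : Fin T → ℝ)
    (ν : Measure (EuclideanSpace ℝ (Fin T))) (hν : ν = gaussianMeasure 0 D) :
    Measure.map
      (fun ε : EuclideanSpace ℝ (Fin T) =>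
        (WithLp.toLp 2 (fun t => ((1 - B)⁻¹ *ᵥ μ) t + ((1 - B)⁻¹ *ᵥ (fun i => ε i)) t) :
          EuclideanSpace ℝ (Fin T))) ν
      = gaussianMeasure ((1 - B)⁻¹ *ᵥ μ) Ω⁻¹ ∧
    Ω⁻¹ = (1 - B)⁻¹ * D * ((1 - B)⁻¹)ᵀ := by
  classical
  set A : Matrix (Fin T) (Fin T) ℝ := 1 - B with hA_def
  -- invertibility of A = 1 - B
  have hAunit : IsUnit A := by
    have : IsNilpotent B := ⟨T, aux_nilpotent_of_acyclic B hacyc⟩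
    exact this.isUnit_one_sub
  have hAdet : IsUnit A.det := (Matrix.isUnit_iff_isUnit_det A).mp hAunit
  have hAdet0 : A.det ≠ 0 := hAdet.ne_zero
  -- determinants
  have hDdetpos : 0 < D.det := by
    rw [hD, Matrix.det_diagonal]
    exact Finset.prod_pos fun t _ => hσ2 t
  have hDdet : IsUnit D.det := isUnit_iff_ne_zero.mpr (ne_of_gt hDdetpos)
  have hΩeq : Ω = Aᵀ * D⁻¹ * A := hΩ
  -- part 2
  have part2 : Ω⁻¹ = A⁻¹ * D * (A⁻¹)ᵀ := by
    rw [hΩeq, Matrix.mul_inv_rev, Matrix.mul_inv_rev,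
      Matrix.nonsing_inv_nonsing_inv D hDdet, ← Matrix.transpose_nonsing_inv,
      Matrix.mul_assoc]
  -- determinant of Ω
  have hΩdet : Ω.det = A.det ^ 2 * D.det⁻¹ := by
    rw [hΩeq, Matrix.det_mul, Matrix.det_mul, Matrix.det_transpose,
      Matrix.det_nonsing_inv, Ring.inverse_eq_inv']
    ring
  have hΩdetpos : 0 < Ω.det := by
    rw [hΩdet]
    positivity
  have hΩdetu : IsUnit Ω.det := isUnit_iff_ne_zero.mpr (ne_of_gt hΩdetpos)
  have hΩinvdet : Ω⁻¹.det = D.det * (A.det ^ 2)⁻¹ := by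
    rw [Matrix.det_nonsing_inv, Ring.inverse_eq_inv', hΩdet]
    field_simp
  have hΩinvinv : (Ω⁻¹)⁻¹ = Ω := Matrix.nonsing_inv_nonsing_inv Ω hΩdetu
  -- the real density identity
  set m : Fin T → ℝ := A⁻¹ *ᵥ μ with hm_def
  have hdensity : ∀ y : Fin T → ℝ,
      |A.det| * gaussianDensity 0 D (A *ᵥ (y - m)) = gaussianDensity m Ω⁻¹ y := by
    intro y
    unfold gaussianDensity
    have hconst : (Ω⁻¹.det) ^ (-(1 : ℝ) / 2) = |A.det| * D.det ^ (-(1 : ℝ) / 2) := by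
      have h2 : ((A.det ^ 2)⁻¹ : ℝ) ^ (-(1 : ℝ)/2) = |A.det| := by
        rw [Real.inv_rpow (sq_nonneg _), neg_div, Real.rpow_neg (sq_nonneg _), inv_inv,
          ← Real.sqrt_eq_rpow, Real.sqrt_sq_eq_abs]
      rw [hΩinvdet, Real.mul_rpow hDdetpos.le (by positivity), h2, mul_comm]
    have hexp : (y - m) ⬝ᵥ ((Ω⁻¹)⁻¹ *ᵥ (y - m))
        = (A *ᵥ (y - m) - 0) ⬝ᵥ (D⁻¹ *ᵥ (A *ᵥ (y - m) - 0)) := by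
      rw [sub_zero, hΩinvinv, hΩeq, ← Matrix.mulVec_mulVec, ← Matrix.mulVec_mulVec,
        Matrix.dotProduct_mulVec, Matrix.vecMul_transpose]
    rw [hexp, hconst]
    ring
  refine ⟨?_, part2⟩
  -- measure-theoretic part
  set e := (MeasurableEquiv.toLp 2 (Fin T → ℝ)).symm with he_def
  set μpi : Measure (Fin T → ℝ) := volume with hμpi_def
  set g₀ : (Fin T → ℝ) → ENNReal := fun y => ENNReal.ofReal (gaussianDensity 0 D y) with hg₀_def
  set g₁ : (Fin T → ℝ) → ENNReal := fun y => ENNReal.ofReal (gaussianDensity m Ω⁻¹ y) with hg₁_def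
  -- gaussianMeasure as pushforward from the pi space
  have hgm : ∀ (mm : Fin T → ℝ) (S : Matrix (Fin T) (Fin T) ℝ),
      gaussianMeasure mm S
        = (μpi.withDensity (fun y => ENNReal.ofReal (gaussianDensity mm S y))).map e.symm := by
    intro mm S
    have hmeas : Measurable (fun y : EuclideanSpace ℝ (Fin T) =>
        ENNReal.ofReal (gaussianDensity mm S (fun i => y i))) :=
      (aux_measurable_gaussianDensity mm S).comp e.measurable
    have h := aux_map_withDensity_equiv e.symm μpi
      (fun y : EuclideanSpace ℝ (Fin T) => ENNReal.ofReal (gaussianDensity mm S (fun i => y i)))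
      hmeas
    rw [(MeasurePreserving.symm _ (EuclideanSpace.volume_preserving_symm_measurableEquiv_toLp (Fin T))).map_eq] at h
    exact h.symm
  -- the affine equivalence
  set Φ := affEquiv A hAdet m with hΦ_def
  -- core computation in the pi space
  have hΦcoe : ⇑Φ = fun ε : Fin T → ℝ => m + A⁻¹ *ᵥ ε := rfl
  have hΦsymmcoe : ⇑Φ.symm = fun y : Fin T → ℝ => A *ᵥ (y - m) := rfl
  have hAinvdet : A⁻¹.det ≠ 0 := by
    rw [Matrix.det_nonsing_inv, Ring.inverse_eq_inv']
    exact inv_ne_zero hAdet0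
  have core : (μpi.withDensity g₀).map Φ = μpi.withDensity g₁ := by
    have hg0 : g₀ = fun x => (fun y => g₀ (Φ.symm y)) (Φ x) := by
      funext x; exact congrArg g₀ (Φ.symm_apply_apply x).symm
    rw [hg0, aux_map_withDensity_equiv Φ μpi (fun y => g₀ (Φ.symm y))
      ((aux_measurable_gaussianDensity 0 D).comp Φ.symm.measurable)]
    have hmap : μpi.map Φ = ENNReal.ofReal |A⁻¹.det⁻¹| • μpi := by
      rw [hΦcoe]
      exact aux_map_affine_volume A⁻¹ hAinvdet m
    rw [hmap, withDensity_smul_measure,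
      ← withDensity_smul _ (f := fun y => g₀ (Φ.symm y))
        ((aux_measurable_gaussianDensity 0 D).comp Φ.symm.measurable)]
    congr 1
    funext y
    have habs : |A⁻¹.det⁻¹| = |A.det| := by
      rw [Matrix.det_nonsing_inv, Ring.inverse_eq_inv', inv_inv]
    simp only [Pi.smul_apply, smul_eq_mul, hΦsymmcoe, hg₀_def, hg₁_def, habs,
      ← ENNReal.ofReal_mul (abs_nonneg A.det), hdensity y]
  -- put things together
  have hF : (fun ε : EuclideanSpace ℝ (Fin T) =>
        (WithLp.toLp 2 (fun t => m t + (A⁻¹ *ᵥ (fun i => ε i)) t) : EuclideanSpace ℝ (Fin T)))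
      = ⇑e.symm ∘ ⇑Φ ∘ ⇑e := rfl
  rw [hν, hgm 0 D, hgm m Ω⁻¹, hF, ← core, ← Function.comp_assoc,
    ← Measure.map_map (e.symm.measurable.comp Φ.measurable) e.measurable,
    MeasurableEquiv.map_map_symm, ← Measure.map_map e.symm.measurable Φ.measurable]
end

section
/- (Result 1, density factorization.) Let B : Matrix (Fin T) (Fin T) ℝ have acyclic support, σ² : Fin T → ℝ with σ² t > 0 for all t, D = Matrix.diagonal σ², Ω = (1 − B)ᵀ * D⁻¹ * (1 − B), μ ∈ ℝ^T, and m = (1 − B)⁻¹ * μ. Then for every y ∈ ℝ^T, ∏_t (2π · σ² t)^{−1/2} · exp(−(y t − μ t − ∑_v B t v · y v)² / (2 σ² t)) = (2π)^{−T/2} · (det Ω)^{1/2} · exp(−(1/2) · (y − m)ᵀ * Ω * (y − m)); that is, the product over t of the univariate N(μ_t + ∑_{v ∈ pa(t)} β_{tv} y_v, σ_t²) densities evaluated at y_t equals the multivariate Gaussian density with mean m and covariance Ω⁻¹ evaluated at y. -/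
open Matrix Real

lemma aux_det_one_sub {T : ℕ} (B : Matrix (Fin T) (Fin T) ℝ)
    (hacyc : HasAcyclicSupport B) :
    (1 - B).det = 1 := by
  classical
  set r : Fin T → Fin T → Prop := fun v t => B t v ≠ 0 with hr
  haveI : IsTrans (Fin T) (Relation.TransGen r) := ⟨fun _ _ _ => Relation.TransGen.trans⟩
  haveI : IsIrrefl (Fin T) (Relation.TransGen r) := ⟨hacyc⟩
  have hwf : WellFounded r :=
    Subrelation.wf (fun h => Relation.TransGen.single h)
      (Finite.wellFounded_of_trans_of_irrefl (Relation.TransGen r))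
  haveI : IsWellFounded (Fin T) r := ⟨hwf⟩
  set f : Fin T → Ordinalᵒᵈ := fun i => OrderDual.toDual (IsWellFounded.rank r i) with hf
  have hrank : ∀ {i j : Fin T}, B i j ≠ 0 →
      IsWellFounded.rank r j < IsWellFounded.rank r i := fun h =>
    IsWellFounded.rank_lt_of_rel h
  have hbt : (1 - B).BlockTriangular f := by
    intro i j hij
    by_contra hne
    have hij' : i ≠ j := by rintro rfl; exact lt_irrefl _ hij
    have hB : B i j ≠ 0 := by
      intro h0
      apply hne
      simp [Matrix.sub_apply, Matrix.one_apply_ne hij', h0]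
    have h1 : IsWellFounded.rank r j < IsWellFounded.rank r i := hrank hB
    have h2 : IsWellFounded.rank r i < IsWellFounded.rank r j := hij
    exact absurd (h1.trans h2) (lt_irrefl _)
  rw [hbt.det]
  refine Finset.prod_eq_one fun a _ => ?_
  have hblock : (1 - B).toSquareBlock f a = 1 := by
    ext i j
    by_cases h : (i : Fin T) = j
    · have hij : i = j := Subtype.ext h
      subst hij
      have hBii : B (i : Fin T) i = 0 := by
        by_contra h0
        exact hacyc i (Relation.TransGen.single h0)
      simp [Matrix.toSquareBlock_def, Matrix.sub_apply, Matrix.one_apply, hBii]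
    · have hBij : B (i : Fin T) j = 0 := by
        by_contra h0
        have h1 : IsWellFounded.rank r (j : Fin T) < IsWellFounded.rank r (i : Fin T) :=
          hrank h0
        have : f (i : Fin T) = f (j : Fin T) := i.2.trans j.2.symm
        have : IsWellFounded.rank r (i : Fin T) = IsWellFounded.rank r (j : Fin T) :=
          OrderDual.toDual_inj.mp this
        exact h1.ne' this
      simp [Matrix.toSquareBlock_def, Matrix.sub_apply, Matrix.one_apply,
        Subtype.ext_iff, h, hBij]
  rw [hblock, Matrix.det_one]


/-- Result 1 (density factorization): the product over `t` of the univariate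
`N(μ t + ∑ᵥ B t v · y v, σ² t)` densities evaluated at `y t` equals the multivariate
Gaussian density with mean `m = (1 - B)⁻¹ *ᵥ μ` and covariance `Ω⁻¹` evaluated at `y`,
where `Ω = (1 - B)ᵀ * D⁻¹ * (1 - B)` and `D = diagonal σ²`. -/
theorem stmt_9 (T : ℕ) (hT : 0 < T) (B : Matrix (Fin T) (Fin T) ℝ)
    (hacyc : HasAcyclicSupport B)
    (σ2 : Fin T → ℝ) (hσ2 : ∀ t, 0 < σ2 t)
    (D : Matrix (Fin T) (Fin T) ℝ) (hD : D = Matrix.diagonal σ2)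
    (Ω : Matrix (Fin T) (Fin T) ℝ) (hΩ : Ω = (1 - B)ᵀ * D⁻¹ * (1 - B))
    (μ : Fin T → ℝ)
    (m : Fin T → ℝ) (hm : m = (1 - B)⁻¹ *ᵥ μ)
    (y : Fin T → ℝ) :
    ∏ t, (2 * π * σ2 t) ^ (-(1 : ℝ) / 2) *
        Real.exp (-(y t - μ t - ∑ v, B t v * y v) ^ 2 / (2 * σ2 t)) =
      (2 * π) ^ (-(T : ℝ) / 2) * Ω.det ^ ((1 : ℝ) / 2) *
        Real.exp (-(1 / 2) * ((y - m) ⬝ᵥ (Ω *ᵥ (y - m)))) := by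
  classical
  set A : Matrix (Fin T) (Fin T) ℝ := 1 - B with hA
  have hdetA : A.det = 1 := aux_det_one_sub B hacyc
  have hAunit : IsUnit A.det := by rw [hdetA]; exact isUnit_one
  have hAm : A *ᵥ m = μ := by
    rw [hm, Matrix.mulVec_mulVec, Matrix.mul_nonsing_inv _ hAunit, Matrix.one_mulVec]
  set e : Fin T → ℝ := A *ᵥ (y - m) with he
  have he' : ∀ t, e t = y t - μ t - ∑ v, B t v * y v := by
    intro t
    have h1 : e t = (A *ᵥ y) t - μ t := by
      rw [he, ← hAm, Matrix.mulVec_sub]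
      simp
    have h2 : (A *ᵥ y) t = y t - ∑ v, B t v * y v := by
      simp [hA, Matrix.mulVec, dotProduct, Matrix.sub_apply, Matrix.one_apply,
        sub_mul, Finset.sum_sub_distrib, ite_mul]
    rw [h1, h2]; ring
  have hDinv : D⁻¹ = Matrix.diagonal fun t => (σ2 t)⁻¹ := by
    apply Matrix.inv_eq_right_inv
    rw [hD, Matrix.diagonal_mul_diagonal]
    have hfun : (fun t => σ2 t * (σ2 t)⁻¹) = fun _ => (1:ℝ) :=
      funext fun t => mul_inv_cancel₀ (hσ2 t).ne'
    rw [hfun, Matrix.diagonal_one]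
  have hquad : (y - m) ⬝ᵥ (Ω *ᵥ (y - m)) = ∑ t, e t * ((σ2 t)⁻¹ * e t) := by
    rw [hΩ, ← Matrix.mulVec_mulVec, ← Matrix.mulVec_mulVec,
      Matrix.dotProduct_mulVec, Matrix.vecMul_transpose, ← he, hDinv]
    simp [dotProduct, Matrix.mulVec_diagonal]
  have hdetΩ : Ω.det = ∏ t, (σ2 t)⁻¹ := by
    rw [hΩ, Matrix.det_mul, Matrix.det_mul, Matrix.det_transpose, hdetA,
      Matrix.det_nonsing_inv, hD, Matrix.det_diagonal]
    simp [Finset.prod_inv_distrib]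
  have h2π : (0:ℝ) < 2 * π := by positivity
  have hconst : ∏ t : Fin T, (2 * π * σ2 t) ^ (-(1:ℝ)/2) =
      (2 * π) ^ (-(T:ℝ)/2) * Ω.det ^ ((1:ℝ)/2) := by
    have h1 : ∀ t : Fin T, (2 * π * σ2 t) ^ (-(1:ℝ)/2) =
        (2*π) ^ (-(1:ℝ)/2) * (σ2 t) ^ (-(1:ℝ)/2) :=
      fun t => Real.mul_rpow h2π.le (hσ2 t).le
    rw [Finset.prod_congr rfl (fun t _ => h1 t), Finset.prod_mul_distrib,
      Finset.prod_const, Finset.card_univ, Fintype.card_fin]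
    congr 1
    · rw [← Real.rpow_natCast ((2*π) ^ (-(1:ℝ)/2)) T, ← Real.rpow_mul h2π.le]
      congr 1
      ring
    · rw [hdetΩ, ← Real.finset_prod_rpow _ _ (fun t _ => inv_nonneg.mpr (hσ2 t).le)]
      refine (Finset.prod_congr rfl fun t _ => ?_).symm
      rw [Real.inv_rpow (hσ2 t).le, ← Real.rpow_neg (hσ2 t).le]
      congr 1
      ring
  rw [Finset.prod_mul_distrib, ← Real.exp_sum, hconst, hquad, Finset.mul_sum]
  congr 1
  congr 1
  refine Finset.sum_congr rfl fun t _ => ?_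
  rw [← he' t]
  have hσ : σ2 t ≠ 0 := (hσ2 t).ne'
  field_simp
end

section
/- (Theorem 1, Verma–Pearl criterion for Markov equivalence.) Let G₁ and G₂ be directed acyclic graphs on the same finite vertex set V. Then G₁ and G₂ are Markov equivalent (they determine exactly the same d-separation relations among disjoint subsets of V) if and only if G₁ and G₂ have the same skeleton and the same set of v-structures. -/
section GraphDefs

variable {V : Type*}

/-- `u` and `v` are adjacent: there is an edge between them in some direction. -/
def Adj (E : V → V → Prop) (u v : V) : Prop := E u v ∨ E v u

/-- `E` is a DAG: the edge relation has no directed cycle (in particular it is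
irreflexive). -/
def IsDAG (E : V → V → Prop) : Prop := ∀ v, ¬ Relation.TransGen E v v

/-- `(u, m, v)` is a v-structure: edges `u → m ← v` with `u ≠ v` and `u`, `v`
not adjacent. -/
def VStruct (E : V → V → Prop) (u m v : V) : Prop :=
  E u m ∧ E v m ∧ u ≠ v ∧ ¬ Adj E u v

/-- A path: a list of distinct vertices, each consecutive pair adjacent (traversed along
or against edge directions). -/
def IsPath (E : V → V → Prop) (p : List V) : Prop :=
  p.Nodup ∧ p.Chain' (Adj E)

/-- A path `p` is blocked by `Z` if it contains a non-collider interior vertex in `Z`, or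
a collider `m` such that neither `m` nor any descendant of `m` belongs to `Z`. -/
def Blocked (E : V → V → Prop) (Z : Set V) (p : List V) : Prop :=
  (∃ (i : ℕ) (a m b : V), p[i]? = some a ∧ p[i + 1]? = some m ∧ p[i + 2]? = some b ∧
      ¬(E a m ∧ E b m) ∧ m ∈ Z) ∨
  (∃ (i : ℕ) (a m b : V), p[i]? = some a ∧ p[i + 1]? = some m ∧ p[i + 2]? = some b ∧
      E a m ∧ E b m ∧ ∀ d, Relation.ReflTransGen E m d → d ∉ Z)

/-- `X` and `Y` are d-separated by `Z`: every path from a vertex of `X` to a vertex of `Y`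
is blocked by `Z`. -/
def DSep (E : V → V → Prop) (X Y Z : Set V) : Prop :=
  ∀ p : List V, IsPath E p → (∃ x ∈ X, p.head? = some x) →
    (∃ y ∈ Y, p.getLast? = some y) → Blocked E Z p

/-- Two DAGs on the same vertex set are Markov equivalent if they determine exactly the
same d-separation relations among disjoint subsets of the vertex set. -/
def MarkovEquiv (E₁ E₂ : V → V → Prop) : Prop :=
  ∀ X Y Z : Set V, Disjoint X Y → Disjoint X Z → Disjoint Y Z →
    (DSep E₁ X Y Z ↔ DSep E₂ X Y Z)

end GraphDefs

namespace VP

variable {V : Type*}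

lemma dag_irrefl {E : V → V → Prop} (h : IsDAG E) (v : V) : ¬ E v v :=
  fun he => h v (Relation.TransGen.single he)

lemma dag_no2 {E : V → V → Prop} (h : IsDAG E) {x y : V} (hxy : E x y) (hyx : E y x) : False :=
  h x (Relation.TransGen.head hxy (Relation.TransGen.single hyx))

lemma dag_no3 {E : V → V → Prop} (h : IsDAG E) {x y z : V} (h1 : E x y) (h2 : E y z)
    (h3 : E z x) : False :=
  h x (Relation.TransGen.head h1 (Relation.TransGen.head h2 (Relation.TransGen.single h3)))

lemma edge_ne {E : V → V → Prop} (h : IsDAG E) {x y : V} (hxy : E x y) : x ≠ y :=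
  fun he => dag_irrefl h y (he ▸ hxy)

/-- The condition an interior triple of an unblocked path must satisfy. -/
def TOK (E : V → V → Prop) (Z : Set V) (a m b : V) : Prop :=
  (E a m ∧ E b m → ∃ d, Relation.ReflTransGen E m d ∧ d ∈ Z) ∧
  (¬(E a m ∧ E b m) → m ∉ Z)

/-- Index-based statement that all interior triples are fine. -/
def ActI (E : V → V → Prop) (Z : Set V) (p : List V) : Prop :=
  ∀ i a m b, p[i]? = some a → p[i + 1]? = some m → p[i + 2]? = some b → TOK E Z a m b

lemma not_blocked_iff {E : V → V → Prop} {Z : Set V} {p : List V} :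
    ¬ Blocked E Z p ↔ ActI E Z p := by
  unfold Blocked ActI TOK
  push_neg
  constructor
  · rintro ⟨h1, h2⟩ i a m b ha hm hb
    refine ⟨fun hc => ?_, fun hnc => h1 i a m b ha hm hb hnc⟩
    obtain ⟨d, hd1, hd2⟩ := h2 i a m b ha hm hb hc.1 hc.2
    exact ⟨d, hd1, hd2⟩
  · intro h
    constructor
    · intro i a m b ha hm hb hnc
      exact (h i a m b ha hm hb).2 hnc
    · intro i a m b ha hm hb h1 h2
      obtain ⟨d, hd1, hd2⟩ := (h i a m b ha hm hb).1 ⟨h1, h2⟩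
      exact ⟨d, hd1, hd2⟩

lemma not_actI {E : V → V → Prop} {Z : Set V} {p : List V} (h : ¬ ActI E Z p) :
    ∃ i a m b, p[i]? = some a ∧ p[i + 1]? = some m ∧ p[i + 2]? = some b ∧ ¬ TOK E Z a m b := by
  unfold ActI at h
  push_neg at h
  obtain ⟨i, a, m, b, ha, hm, hb, ht⟩ := h
  exact ⟨i, a, m, b, ha, hm, hb, ht⟩

/-- Reaching `Z` in exactly `n` steps. -/
def reachZ (E : V → V → Prop) (Z : Set V) : ℕ → V → Prop
  | 0, v => v ∈ Z
  | n + 1, v => ∃ w, E v w ∧ reachZ E Z n w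

noncomputable def phi (E : V → V → Prop) (Z : Set V) (v : V) : ℕ :=
  sInf {n | reachZ E Z n v}

lemma reachZ_rtg {E : V → V → Prop} {Z : Set V} :
    ∀ {n : ℕ} {v : V}, reachZ E Z n v → ∃ d, Relation.ReflTransGen E v d ∧ d ∈ Z := by
  intro n
  induction n with
  | zero => exact fun h => ⟨_, Relation.ReflTransGen.refl, h⟩
  | succ n ih =>
    rintro v ⟨w, hw, hr⟩
    obtain ⟨d, hd, hdZ⟩ := ih hr
    exact ⟨d, Relation.ReflTransGen.head hw hd, hdZ⟩

lemma rtg_reachZ {E : V → V → Prop} {Z : Set V} {v d : V}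
    (h : Relation.ReflTransGen E v d) (hd : d ∈ Z) : ∃ n, reachZ E Z n v := by
  induction h using Relation.ReflTransGen.head_induction_on with
  | refl => exact ⟨0, hd⟩
  | head h _ ih => obtain ⟨n, hn⟩ := ih; exact ⟨n + 1, _, h, hn⟩

lemma phi_le {E : V → V → Prop} {Z : Set V} {n : ℕ} {v : V} (h : reachZ E Z n v) :
    phi E Z v ≤ n := Nat.sInf_le h

lemma reachZ_phi {E : V → V → Prop} {Z : Set V} {v : V} (h : ∃ n, reachZ E Z n v) :
    reachZ E Z (phi E Z v) v := Nat.sInf_mem h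

/-- Measure for the path-transfer induction. -/
noncomputable def mu (E : V → V → Prop) (Z : Set V) (p : List V) : ℕ :=
  (p.map (fun v => phi E Z v + 1)).sum

lemma mu_append (E : V → V → Prop) (Z : Set V) (l s : List V) :
    mu E Z (l ++ s) = mu E Z l + mu E Z s := by
  simp [mu]

lemma mu_cons (E : V → V → Prop) (Z : Set V) (x : V) (s : List V) :
    mu E Z (x :: s) = phi E Z x + 1 + mu E Z s := by
  simp [mu]

lemma mu_pos {E : V → V → Prop} {Z : Set V} {p : List V} (h : p ≠ []) : 1 ≤ mu E Z p := by
  cases p with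
  | nil => exact absurd rfl h
  | cons x t => rw [mu_cons]; omega

end VP

namespace VP

variable {V : Type*} {E₁ E₂ : V → V → Prop}

/-- If a triple is a collider in `E₁` but not in `E₂`, the two outer vertices are adjacent. -/
lemma status_adj (hadj : ∀ u v, Adj E₁ u v ↔ Adj E₂ u v)
    (hvs : ∀ u m v, VStruct E₁ u m v ↔ VStruct E₂ u m v)
    {a m b : V} (h1 : E₁ a m ∧ E₁ b m) (h2 : ¬ (E₂ a m ∧ E₂ b m)) (hne : a ≠ b) :
    Adj E₂ a b := by
  by_contra hna
  have hna1 : ¬ Adj E₁ a b := fun h => hna ((hadj a b).mp h)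
  have hv := (hvs a m b).mp ⟨h1.1, h1.2, hne, hna1⟩
  exact h2 ⟨hv.1, hv.2.1⟩

lemma aux_desc (hadj : ∀ u v, Adj E₁ u v ↔ Adj E₂ u v)
    (hvs : ∀ u m v, VStruct E₁ u m v ↔ VStruct E₂ u m v)
    (h₁ : IsDAG E₁) (h₂ : IsDAG E₂) (Z : Set V) :
    ∀ (n : ℕ) (v u : V), E₂ u v → E₁ u v → reachZ E₂ Z n v → phi E₂ Z v = n →
      phi E₂ Z u = n + 1 → ∃ d, Relation.ReflTransGen E₁ v d ∧ d ∈ Z := by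
  intro n
  induction n with
  | zero => exact fun v u _ _ hr _ _ => ⟨v, Relation.ReflTransGen.refl, hr⟩
  | succ n ih =>
    intro v u huv2 huv1 hr hpv hpu
    obtain ⟨w, hvw2, hrw⟩ := hr
    have hpw : phi E₂ Z w = n := by
      have ha : phi E₂ Z w ≤ n := phi_le hrw
      have hb : phi E₂ Z v ≤ phi E₂ Z w + 1 :=
        phi_le ⟨w, hvw2, reachZ_phi ⟨_, hrw⟩⟩
      omega
    rcases (hadj v w).mpr (Or.inl hvw2) with hvw1 | hwv1
    · obtain ⟨d, hd, hdZ⟩ := ih w v hvw2 hvw1 hrw hpw (by omega)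
      exact ⟨d, Relation.ReflTransGen.head hvw1 hd, hdZ⟩
    · -- the edge v—w is flipped in E₁; derive a contradiction with minimality
      exfalso
      have hne : u ≠ w := fun h => dag_no2 h₂ huv2 (h ▸ hvw2)
      have huw2 : E₂ u w := by
        have haduw : Adj E₂ u w := by
          by_contra hna
          have hna1 : ¬ Adj E₁ u w := fun h => hna ((hadj u w).mp h)
          have hv2 := (hvs u v w).mp ⟨huv1, hwv1, hne, hna1⟩
          exact dag_no2 h₂ hvw2 hv2.2.1
        rcases haduw with h | h
        · exact h
        · exact absurd h (fun h => dag_no3 h₂ huv2 hvw2 h)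
      have : phi E₂ Z u ≤ n + 1 := phi_le ⟨w, huw2, hrw⟩
      omega

/-- Key lemma for colliders in both graphs whose `E₂`-descendants meet `Z` while the
`E₁`-descendants do not: produce a better collider. -/
lemma b1 (hadj : ∀ u v, Adj E₁ u v ↔ Adj E₂ u v)
    (hvs : ∀ u m v, VStruct E₁ u m v ↔ VStruct E₂ u m v)
    (h₁ : IsDAG E₁) (h₂ : IsDAG E₂) (Z : Set V) {a b m : V}
    (ha2 : E₂ a m) (hb2 : E₂ b m) (ha1 : E₁ a m) (hb1 : E₁ b m)
    (hd2 : ∃ d, Relation.ReflTransGen E₂ m d ∧ d ∈ Z)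
    (hd1 : ∀ d, Relation.ReflTransGen E₁ m d → d ∉ Z) :
    ∃ c, E₂ m c ∧ E₂ a c ∧ E₂ b c ∧ (∃ d, Relation.ReflTransGen E₂ c d ∧ d ∈ Z) ∧
      phi E₂ Z c < phi E₂ Z m := by
  obtain ⟨d, hdr, hdZ⟩ := hd2
  have hex : ∃ n, reachZ E₂ Z n m := rtg_reachZ hdr hdZ
  have hr := reachZ_phi hex
  cases hk : phi E₂ Z m with
  | zero =>
    rw [hk] at hr
    exact absurd hr (hd1 m Relation.ReflTransGen.refl)
  | succ n =>
    rw [hk] at hr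
    obtain ⟨c, hmc2, hrc⟩ := hr
    have hpc : phi E₂ Z c = n := by
      have haa : phi E₂ Z c ≤ n := phi_le hrc
      have hbb : phi E₂ Z m ≤ phi E₂ Z c + 1 :=
        phi_le ⟨c, hmc2, reachZ_phi ⟨_, hrc⟩⟩
      omega
    rcases (hadj m c).mpr (Or.inl hmc2) with hmc1 | hcm1
    · exfalso
      obtain ⟨d', hd', hdZ'⟩ := aux_desc hadj hvs h₁ h₂ Z n c m hmc2 hmc1 hrc hpc (by omega)
      exact hd1 d' (Relation.ReflTransGen.head hmc1 hd') hdZ'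
    · -- flipped first edge: c is the desired vertex
      have hac : E₂ a c := by
        have hne : a ≠ c := fun h => dag_no2 h₂ ha2 (h ▸ hmc2)
        have hadj' : Adj E₂ a c := by
          by_contra hna
          have hna1 : ¬ Adj E₁ a c := fun h => hna ((hadj a c).mp h)
          have hv2 := (hvs a m c).mp ⟨ha1, hcm1, hne, hna1⟩
          exact dag_no2 h₂ hmc2 hv2.2.1
        rcases hadj' with h | h
        · exact h
        · exact absurd h (fun h => dag_no3 h₂ ha2 hmc2 h)
      have hbc : E₂ b c := by
        have hne : b ≠ c := fun h => dag_no2 h₂ hb2 (h ▸ hmc2)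
        have hadj' : Adj E₂ b c := by
          by_contra hna
          have hna1 : ¬ Adj E₁ b c := fun h => hna ((hadj b c).mp h)
          have hv2 := (hvs b m c).mp ⟨hb1, hcm1, hne, hna1⟩
          exact dag_no2 h₂ hmc2 hv2.2.1
        rcases hadj' with h | h
        · exact h
        · exact absurd h (fun h => dag_no3 h₂ hb2 hmc2 h)
      exact ⟨c, hmc2, hac, hbc, reachZ_rtg hrc, by omega⟩

end VP

namespace VP

variable {V : Type*} {E : V → V → Prop} {Z : Set V}

lemma idx_left {l s : List V} {j : ℕ} (h : j < l.length) : (l ++ s)[j]? = l[j]? :=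
  List.getElem?_append_left h

lemma idx_right (l s : List V) (k : ℕ) : (l ++ s)[l.length + k]? = s[k]? := by
  rw [List.getElem?_append_right (by omega)]
  congr 1
  omega

lemma idx_right' {l s : List V} {j : ℕ} (h : l.length ≤ j) : (l ++ s)[j]? = s[j - l.length]? :=
  List.getElem?_append_right h

/-- Decompose a path around an interior triple. -/
lemma decomp {p : List V} {i : ℕ} {a m b : V}
    (ha : p[i]? = some a) (hm : p[i + 1]? = some m) (hb : p[i + 2]? = some b) :
    ∃ l r, p = l ++ a :: m :: b :: r ∧ l.length = i := by
  have hia : i < p.length := by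
    by_contra h
    rw [List.getElem?_eq_none (by omega)] at ha; exact absurd ha.symm (Option.some_ne_none _)
  have him : i + 1 < p.length := by
    by_contra h
    rw [List.getElem?_eq_none (by omega)] at hm; exact absurd hm.symm (Option.some_ne_none _)
  have hib : i + 2 < p.length := by
    by_contra h
    rw [List.getElem?_eq_none (by omega)] at hb; exact absurd hb.symm (Option.some_ne_none _)
  refine ⟨p.take i, p.drop (i + 3), ?_, by simp [List.length_take]; omega⟩
  have e1 : p.drop i = p[i] :: p.drop (i + 1) := List.drop_eq_getElem_cons hia
  have e2 : p.drop (i + 1) = p[i + 1] :: p.drop (i + 2) := List.drop_eq_getElem_cons him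
  have e3 : p.drop (i + 2) = p[i + 2] :: p.drop (i + 3) := List.drop_eq_getElem_cons hib
  have ha' : p[i] = a := by
    have := List.getElem?_eq_getElem hia; rw [ha] at this; exact (Option.some_inj.mp this.symm)
  have hm' : p[i + 1] = m := by
    have := List.getElem?_eq_getElem him; rw [hm] at this; exact (Option.some_inj.mp this.symm)
  have hb' : p[i + 2] = b := by
    have := List.getElem?_eq_getElem hib; rw [hb] at this; exact (Option.some_inj.mp this.symm)
  conv_lhs => rw [← List.take_append_drop i p]
  rw [e1, e2, e3, ha', hm', hb']

/-- Unblockedness of a list obtained by deleting a middle block. -/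
lemma actI_delete {l mid s : List V}
    (hA : ActI E Z (l ++ (mid ++ s)))
    (hC1 : ∀ x y z, 2 ≤ l.length → l[l.length - 2]? = some x → l[l.length - 1]? = some y →
        s[0]? = some z → TOK E Z x y z)
    (hC2 : ∀ y z w, 1 ≤ l.length → l[l.length - 1]? = some y → s[0]? = some z →
        s[1]? = some w → TOK E Z y z w) :
    ActI E Z (l ++ s) := by
  intro j a m b hja hjm hjb
  by_cases h1 : j + 2 < l.length
  · refine hA j a m b ?_ ?_ ?_
    · rw [idx_left (by omega)]; rw [idx_left (by omega)] at hja; exact hja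
    · rw [idx_left (by omega)]; rw [idx_left (by omega)] at hjm; exact hjm
    · rw [idx_left (by omega)]; rw [idx_left (by omega)] at hjb; exact hjb
  · by_cases h2 : j + 2 = l.length
    · refine hC1 a m b (by omega) ?_ ?_ ?_
      · rw [idx_left (by omega)] at hja; rw [show l.length - 2 = j by omega]; exact hja
      · rw [idx_left (by omega)] at hjm; rw [show l.length - 1 = j + 1 by omega]; exact hjm
      · rw [idx_right' (by omega)] at hjb; rw [show j + 2 - l.length = 0 by omega] at hjb
        exact hjb
    · by_cases h3 : j + 1 = l.length
      · refine hC2 a m b (by omega) ?_ ?_ ?_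
        · rw [idx_left (by omega)] at hja; rw [show l.length - 1 = j by omega]; exact hja
        · rw [idx_right' (by omega)] at hjm; rw [show j + 1 - l.length = 0 by omega] at hjm
          exact hjm
        · rw [idx_right' (by omega)] at hjb; rw [show j + 2 - l.length = 1 by omega] at hjb
          exact hjb
      · have hjL : l.length ≤ j := by omega
        refine hA (j + mid.length) a m b ?_ ?_ ?_
        · rw [idx_right' (by omega), idx_right' (by omega),
            show j + mid.length - l.length - mid.length = j - l.length by omega]
          rw [idx_right' (by omega)] at hja; exact hja
        · rw [show j + mid.length + 1 = j + 1 + mid.length by omega,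
            idx_right' (by omega), idx_right' (by omega),
            show j + 1 + mid.length - l.length - mid.length = j + 1 - l.length by omega]
          rw [idx_right' (by omega)] at hjm; exact hjm
        · rw [show j + mid.length + 2 = j + 2 + mid.length by omega,
            idx_right' (by omega), idx_right' (by omega),
            show j + 2 + mid.length - l.length - mid.length = j + 2 - l.length by omega]
          rw [idx_right' (by omega)] at hjb; exact hjb

/-- Unblockedness of a list obtained by replacing the centre of a triple. -/
lemma actI_replace {l s : List V} {a m b c : V}
    (hA : ActI E Z (l ++ a :: m :: b :: s))
    (hC1 : ∀ x, l[l.length - 1]? = some x → TOK E Z x a c)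
    (hC0 : TOK E Z a c b)
    (hC2 : ∀ w, s[0]? = some w → TOK E Z c b w) :
    ActI E Z (l ++ a :: c :: b :: s) := by
  intro j x y z hx hy hz
  have hsame : ∀ k, k ≠ l.length + 1 →
      (l ++ a :: c :: b :: s)[k]? = (l ++ a :: m :: b :: s)[k]? := by
    intro k hk
    by_cases h : k < l.length
    · rw [idx_left h, idx_left h]
    · rw [idx_right' (by omega), idx_right' (by omega)]
      rcases Nat.lt_or_ge (k - l.length) 3 with h3 | h3
      · have h0 : k - l.length = 0 ∨ k - l.length = 1 ∨ k - l.length = 2 := by omega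
        rcases h0 with h' | h' | h'
        · simp [h']
        · omega
        · simp [h']
      · rw [show k - l.length = (k - l.length - 3) + 3 by omega]
        simp
  by_cases h1 : j + 2 < l.length + 1
  · rw [hsame j (by omega)] at hx
    rw [hsame (j+1) (by omega)] at hy
    rw [hsame (j+2) (by omega)] at hz
    exact hA j x y z hx hy hz
  · by_cases h2 : j + 2 = l.length + 1
    · -- window (x, a, c)
      have hyv : y = a := by
        rw [idx_right' (by omega), show j + 1 - l.length = 0 by omega] at hy
        simpa using hy.symm
      have hzv : z = c := by
        rw [idx_right' (by omega), show j + 2 - l.length = 1 by omega] at hz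
        simpa using hz.symm
      subst hyv hzv
      refine hC1 x ?_
      rw [idx_left (by omega)] at hx
      rw [show l.length - 1 = j by omega]; exact hx
    · by_cases h3 : j = l.length
      · have hxv : x = a := by
          rw [idx_right' (by omega), show j - l.length = 0 by omega] at hx
          simpa using hx.symm
        have hyv : y = c := by
          rw [idx_right' (by omega), show j + 1 - l.length = 1 by omega] at hy
          simpa using hy.symm
        have hzv : z = b := by
          rw [idx_right' (by omega), show j + 2 - l.length = 2 by omega] at hz
          simpa using hz.symm
        subst hxv hyv hzv; exact hC0
      · by_cases h4 : j = l.length + 1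
        · have hxv : x = c := by
            rw [idx_right' (by omega), show j - l.length = 1 by omega] at hx
            simpa using hx.symm
          have hyv : y = b := by
            rw [idx_right' (by omega), show j + 1 - l.length = 2 by omega] at hy
            simpa using hy.symm
          have hzv : s[0]? = some z := by
            rw [idx_right' (by omega), show j + 2 - l.length = 3 by omega] at hz
            simpa using hz
          subst hxv hyv; exact hC2 z hzv
        · rw [hsame j (by omega)] at hx
          rw [hsame (j+1) (by omega)] at hy
          rw [hsame (j+2) (by omega)] at hz
          exact hA j x y z hx hy hz

end VP

namespace VP

variable {V : Type*} {E : V → V → Prop}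

lemma win_idx {p l r : List V} {x m y : V} (hp : p = l ++ x :: m :: y :: r) :
    p[l.length]? = some x ∧ p[l.length + 1]? = some m ∧ p[l.length + 2]? = some y := by
  subst hp
  refine ⟨?_, ?_, ?_⟩
  · rw [show (l.length : ℕ) = l.length + 0 by omega, idx_right]; simp
  · rw [idx_right]; simp
  · rw [idx_right]; simp

lemma descend_path (E : V → V → Prop) :
    ∀ (p : List V) (v w : V), List.Chain' (Adj E) (v :: w :: p) → E v w →
      (∃ l x m y r, v :: w :: p = l ++ x :: m :: y :: r ∧ E x m ∧ E y m ∧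
        Relation.TransGen E v m) ∨
      Relation.TransGen E v ((v :: w :: p).getLast (by simp)) := by
  intro p
  induction p with
  | nil =>
    intro v w _ hvw
    right
    simpa using Relation.TransGen.single hvw
  | cons z p' ih =>
    intro v w hch hvw
    have hch' : List.Chain' (Adj E) (w :: z :: p') := hch.tail
    have hadj : Adj E w z := (List.isChain_cons_cons.mp hch').1
    rcases hadj with hwz | hzw
    · rcases ih w z hch' hwz with ⟨l, x, m, y, r, heq, hxm, hym, htg⟩ | htg
      · exact Or.inl ⟨v :: l, x, m, y, r, by rw [List.cons_append, ← heq],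
          hxm, hym, Relation.TransGen.head hvw htg⟩
      · right
        rw [List.getLast_cons (by simp)]
        exact Relation.TransGen.head hvw htg
    · exact Or.inl ⟨[], v, w, z, p', rfl, hvw, hzw, Relation.TransGen.single hvw⟩

lemma parent_sep (h : IsDAG E) {u v : V} (hne : u ≠ v) (hnadj : ¬ Adj E u v)
    (hnd : ¬ Relation.TransGen E v u) :
    DSep E {v} {u} {w | E w v} := by
  rintro p ⟨hndp, hch⟩ ⟨x, hx, hhead⟩ ⟨y, hy, hlast⟩
  simp only [Set.mem_singleton_iff] at hx hy
  rw [hx] at hhead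
  rw [hy] at hlast
  clear hx hy
  cases p with
  | nil => exact absurd hhead (by simp)
  | cons x t =>
  have hxv : v = x := (by simpa using hhead : x = v).symm
  subst hxv
  cases t with
  | nil => exact absurd (show v = u by simpa using hlast) hne.symm
  | cons w t' =>
  have hadj : Adj E v w := (List.isChain_cons_cons.mp hch).1
  rcases hadj with hvw | hwv
  · rcases descend_path E t' v w hch hvw with ⟨l, a, m, b, r, heq, ham, hbm, htg⟩ | htg
    · right
      obtain ⟨h1, h2, h3⟩ := win_idx heq
      refine ⟨l.length, a, m, b, h1, h2, h3, ham, hbm, ?_⟩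
      intro d hd hdZ
      exact h v (Relation.TransGen.tail' (htg.to_reflTransGen.trans hd) hdZ)
    · exfalso
      have hlu : (v :: w :: t').getLast (by simp) = u := by
        rw [List.getLast?_eq_getLast (by simp)] at hlast
        simpa using hlast
      exact hnd (hlu ▸ htg)
  · cases t' with
    | nil =>
      have hwu : w = u := by simpa using hlast
      exact absurd (Or.inl (hwu ▸ hwv)) hnadj
    | cons z t'' =>
      left
      refine ⟨0, v, w, z, by simp, by simp, by simp, ?_, hwv⟩
      rintro ⟨hvw, -⟩
      exact dag_no2 h hvw hwv

lemma unblock_edge (h : IsDAG E) {u v : V} (hadj : Adj E u v) (Z : Set V) :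
    ¬ DSep E {u} {v} Z := by
  intro hd
  have hne : u ≠ v := by
    rintro rfl
    rcases hadj with h' | h' <;> exact dag_irrefl h _ h'
  have hb := hd [u, v] ⟨by simp [hne], List.isChain_cons_cons.mpr ⟨hadj, List.isChain_singleton _⟩⟩ ⟨u, rfl, rfl⟩ ⟨v, rfl, by simp⟩
  rcases hb with ⟨i, a, m, b, _, _, hbv, _⟩ | ⟨i, a, m, b, _, _, hbv, _⟩ <;>
    · have hnone : ([u, v] : List V)[i+2]? = none := List.getElem?_eq_none (by simp)
      rw [hnone] at hbv
      exact absurd hbv.symm (Option.some_ne_none _)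

end VP

namespace VP

variable {V : Type*} {E₁ E₂ : V → V → Prop}

lemma me_symm (h : MarkovEquiv E₁ E₂) : MarkovEquiv E₂ E₁ :=
  fun X Y Z h1 h2 h3 => (h X Y Z h1 h2 h3).symm

lemma adj_symm {E : V → V → Prop} {u v : V} (h : Adj E u v) : Adj E v u := h.symm

lemma adj_transfer (hme : MarkovEquiv E₁ E₂) (h₁ : IsDAG E₁) (h₂ : IsDAG E₂) {u v : V}
    (h : Adj E₁ u v) : Adj E₂ u v := by
  by_contra hna
  have hne : u ≠ v := by
    rintro rfl
    rcases h with h' | h' <;> exact dag_irrefl h₁ _ h'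
  by_cases htg : Relation.TransGen E₂ v u
  · have hnt : ¬ Relation.TransGen E₂ u v := fun h' => h₂ u (h'.trans htg)
    have hds : DSep E₂ {u} {v} {w | E₂ w u} :=
      parent_sep h₂ hne.symm (fun ha => hna (adj_symm ha)) hnt
    have hd1 : Disjoint ({u} : Set V) {v} := by simp [hne]
    have hd2 : Disjoint ({u} : Set V) {w | E₂ w u} := by
      simp only [Set.disjoint_singleton_left, Set.mem_setOf_eq]
      exact dag_irrefl h₂ u
    have hd3 : Disjoint ({v} : Set V) {w | E₂ w u} := by
      simp only [Set.disjoint_singleton_left, Set.mem_setOf_eq]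
      exact fun hv => hna (Or.inr hv)
    have := (hme _ _ _ hd1 hd2 hd3).mpr hds
    exact unblock_edge h₁ h _ this
  · have hds : DSep E₂ {v} {u} {w | E₂ w v} := parent_sep h₂ hne hna htg
    have hd1 : Disjoint ({v} : Set V) {u} := by simp [hne.symm]
    have hd2 : Disjoint ({v} : Set V) {w | E₂ w v} := by
      simp only [Set.disjoint_singleton_left, Set.mem_setOf_eq]
      exact dag_irrefl h₂ v
    have hd3 : Disjoint ({u} : Set V) {w | E₂ w v} := by
      simp only [Set.disjoint_singleton_left, Set.mem_setOf_eq]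
      exact fun hv => hna (Or.inl hv)
    have := (hme _ _ _ hd1 hd2 hd3).mpr hds
    exact unblock_edge h₁ (adj_symm h) _ this

lemma vstruct_transfer (hme : MarkovEquiv E₁ E₂) (h₁ : IsDAG E₁) (h₂ : IsDAG E₂)
    (hskel : ∀ u v, Adj E₁ u v ↔ Adj E₂ u v) {u m v : V}
    (hv : VStruct E₁ u m v) : VStruct E₂ u m v := by
  obtain ⟨hum, hvm, hne, hnadj⟩ := hv
  have hnadj2 : ¬ Adj E₂ u v := fun h => hnadj ((hskel u v).mpr h)
  by_contra hnv2
  have hnboth : ¬ (E₂ u m ∧ E₂ v m) := fun ⟨x, y⟩ => hnv2 ⟨x, y, hne, hnadj2⟩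
  have hadjum : E₂ u m ∨ E₂ m u := (hskel u m).mp (Or.inl hum)
  have hadjvm : E₂ v m ∨ E₂ m v := (hskel v m).mp (Or.inl hvm)
  have key : ∀ w o : V, E₂ m w → ¬ Relation.TransGen E₂ w o → E₁ w m → E₁ o m → o ≠ w →
      ¬ Adj E₂ o w → False := by
    intro w o hmw hnt hw1 ho1 how hnadj2'
    have hds : DSep E₂ {w} {o} {x | E₂ x w} := parent_sep h₂ how hnadj2' hnt
    have hd1 : Disjoint ({w} : Set V) {o} := by simp [Ne.symm how]
    have hd2 : Disjoint ({w} : Set V) {x | E₂ x w} := by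
      simp only [Set.disjoint_singleton_left, Set.mem_setOf_eq]
      exact dag_irrefl h₂ w
    have hd3 : Disjoint ({o} : Set V) {x | E₂ x w} := by
      simp only [Set.disjoint_singleton_left, Set.mem_setOf_eq]
      exact fun hv' => hnadj2' (Or.inl hv')
    have hds1 : DSep E₁ {w} {o} {x | E₂ x w} := (hme _ _ _ hd1 hd2 hd3).mpr hds
    have hwm : w ≠ m := fun h => dag_irrefl h₂ m (h ▸ hmw)
    have hmo : m ≠ o := fun h => dag_irrefl h₁ m (by rw [← h] at ho1; exact ho1)
    have hwo : w ≠ o := Ne.symm how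
    have hchain : List.Chain' (Adj E₁) [w, m, o] := by
      refine List.isChain_cons_cons.mpr ⟨Or.inl hw1, ?_⟩
      refine List.isChain_cons_cons.mpr ⟨Or.inr ho1, ?_⟩
      simp
    have hbl := hds1 [w, m, o] ⟨by simp [hwm, hmo, hwo], hchain⟩ ⟨w, rfl, rfl⟩
      ⟨o, rfl, by simp⟩
    have hiz : ∀ (i : ℕ) (b : V), ([w, m, o] : List V)[i + 2]? = some b → i = 0 ∧ b = o := by
      intro i b hb
      have hi : i = 0 := by
        by_contra hcon
        rw [List.getElem?_eq_none (by simp; omega)] at hb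
        exact absurd hb.symm (Option.some_ne_none _)
      subst hi
      simp only [show (0:ℕ) + 2 = 2 by rfl] at hb
      exact ⟨rfl, (by simpa using hb : o = b).symm⟩
    rcases hbl with ⟨i, a, m', b, hia, him, hib, hnc, hmZ⟩ |
      ⟨i, a, m', b, hia, him, hib, hc1, hc2, hall⟩
    · obtain ⟨hi0, hbo⟩ := hiz i b hib
      subst hi0
      have ham : w = a := by simpa using hia
      have hmm : m = m' := by simpa using him
      subst ham; subst hmm
      have hbo' : o = b := hbo.symm
      subst hbo'
      exact hnc ⟨hw1, ho1⟩
    · obtain ⟨hi0, hbo⟩ := hiz i b hib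
      subst hi0
      have hmm : m = m' := by simpa using him
      subst hmm
      exact hall m Relation.ReflTransGen.refl hmw
  rcases hadjum with hum2 | hmu2
  · -- E₂ u m; then from ¬both, E₂ m v
    have hmv2 : E₂ m v := by
      rcases hadjvm with h' | h'
      · exact absurd ⟨hum2, h'⟩ hnboth
      · exact h'
    by_cases htg : Relation.TransGen E₂ v u
    · -- cycle m → v ⟶⁺ u → m
      exact absurd ((Relation.TransGen.head hmv2 htg).tail hum2) (h₂ m)
    · exact key v u hmv2 htg hvm hum hne hnadj2
  · -- E₂ m u
    by_cases htg : Relation.TransGen E₂ u v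
    · -- then also E₂ m v and ¬ v ⟶⁺ u
      have hmv2 : E₂ m v := by
        rcases hadjvm with h' | h'
        · exact ((h₂ m) ((Relation.TransGen.head hmu2 htg).tail h')).elim
        · exact h'
      have hnt : ¬ Relation.TransGen E₂ v u := fun h' => h₂ u (htg.trans h')
      exact key v u hmv2 hnt hvm hum hne hnadj2
    · exact key u v hmu2 htg hum hvm hne.symm (fun h => hnadj2 (adj_symm h))
end VP

namespace VP

variable {V : Type*} {E : V → V → Prop} {Z : Set V}

lemma head?_append_cons (l : List V) (x : V) (t t' : List V) :
    (l ++ x :: t).head? = (l ++ x :: t').head? := by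
  cases l <;> simp

lemma surgery_delete {p l mid s : List V}
    (hpe : p = l ++ (mid ++ s)) (hln : l ≠ []) (hsn : s ≠ []) (hmn : mid ≠ [])
    (hp : IsPath E p) (hA : ActI E Z p)
    (hseam : ∀ x y, l.getLast? = some x → s.head? = some y → Adj E x y)
    (hC1 : ∀ x y z, 2 ≤ l.length → l[l.length - 2]? = some x → l[l.length - 1]? = some y →
        s[0]? = some z → TOK E Z x y z)
    (hC2 : ∀ y z w, 1 ≤ l.length → l[l.length - 1]? = some y → s[0]? = some z →
        s[1]? = some w → TOK E Z y z w) :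
    IsPath E (l ++ s) ∧ ActI E Z (l ++ s) ∧ mu E Z (l ++ s) < mu E Z p ∧
      (l ++ s).head? = p.head? ∧ (l ++ s).getLast? = p.getLast? := by
  have hsub : List.Sublist (l ++ s) p := by
    rw [hpe]
    exact (List.sublist_append_right mid s).append_left l
  refine ⟨⟨hsub.nodup hp.1, ?_⟩, actI_delete (hpe ▸ hA) hC1 hC2, ?_, ?_, ?_⟩
  · have hch := hp.2
    rw [hpe] at hch
    replace hch := List.isChain_append.mp hch
    obtain ⟨cl, cms, _⟩ := hch
    rw [List.isChain_append] at cms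
    refine List.isChain_append.mpr ⟨cl, cms.2.1, ?_⟩
    intro x hx y hy
    exact hseam x y (Option.mem_def.mp hx) (Option.mem_def.mp hy)
  · rw [hpe, mu_append, mu_append, mu_append]
    have := mu_pos (E := E) (Z := Z) hmn
    omega
  · rw [hpe, List.head?_append_of_ne_nil _ hln, List.head?_append_of_ne_nil _ hln]
  · have e1 : (l ++ s).getLast? = s.getLast? := List.getLast?_append_of_ne_nil (l₁ := l) hsn
    have e2 : (l ++ (mid ++ s)).getLast? = s.getLast? := by
      rw [List.getLast?_append_of_ne_nil (l₁ := l) (by simp [hsn]),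
        List.getLast?_append_of_ne_nil (l₁ := mid) hsn]
    rw [hpe, e1, e2]

end VP

namespace VP

variable {V : Type*} {E : V → V → Prop} {Z : Set V}

lemma surgery_replace {p l s : List V} {a m b c : V}
    (hpe : p = l ++ a :: m :: b :: s) (hp : IsPath E p) (hA : ActI E Z p)
    (hcp : c ∉ p) (hac : Adj E a c) (hcb : Adj E c b)
    (hph : phi E Z c < phi E Z m)
    (hC1 : ∀ x, l[l.length - 1]? = some x → TOK E Z x a c)
    (hC0 : TOK E Z a c b)
    (hC2 : ∀ w, s[0]? = some w → TOK E Z c b w) :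
    IsPath E (l ++ a :: c :: b :: s) ∧ ActI E Z (l ++ a :: c :: b :: s) ∧
      mu E Z (l ++ a :: c :: b :: s) < mu E Z p ∧
      (l ++ a :: c :: b :: s).head? = p.head? ∧
      (l ++ a :: c :: b :: s).getLast? = p.getLast? := by
  have hsubdel : List.Sublist (l ++ a :: b :: s) p := by
    rw [hpe]
    refine List.Sublist.append_left ?_ l
    exact List.cons_sublist_cons.mpr (List.sublist_cons_self m (b :: s))
  constructor
  · constructor
    · -- Nodup
      have h1 : ((l ++ [a]) ++ c :: (b :: s)).Nodup ↔ (c :: ((l ++ [a]) ++ (b :: s))).Nodup :=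
        List.nodup_middle
      have h2 : (l ++ a :: c :: b :: s) = ((l ++ [a]) ++ c :: (b :: s)) := by simp
      rw [h2, h1]
      refine List.nodup_cons.mpr ⟨?_, ?_⟩
      · intro hmem
        apply hcp
        have : (l ++ [a]) ++ b :: s = l ++ a :: b :: s := by simp
        rw [this] at hmem
        exact List.Sublist.mem hmem hsubdel
      · have : (l ++ [a]) ++ (b :: s) = l ++ a :: b :: s := by simp
        rw [this]
        exact hsubdel.nodup hp.1
    · -- Chain'
      have hch := hp.2
      rw [hpe] at hch
      replace hch := List.isChain_append.mp hch
      obtain ⟨cl, crest, hseam⟩ := hch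
      have c1 : Adj E m b := (List.isChain_cons_cons.mp (List.isChain_cons_cons.mp crest).2).1
      have cbs : (b :: s).Chain' (Adj E) := (List.isChain_cons_cons.mp (List.isChain_cons_cons.mp crest).2).2
      refine List.isChain_append.mpr ⟨cl, ?_, ?_⟩
      · exact List.isChain_cons_cons.mpr ⟨hac, List.isChain_cons_cons.mpr ⟨hcb, cbs⟩⟩
      · intro x hx y hy
        simp only [List.head?_cons, Option.mem_def, Option.some_inj] at hy
        subst hy
        exact hseam x hx a (Option.mem_def.mpr rfl)
  · refine ⟨actI_replace (hpe ▸ hA) hC1 hC0 hC2, ?_, ?_, ?_⟩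
    · rw [hpe]
      rw [mu_append, mu_append, mu_cons, mu_cons, mu_cons, mu_cons, mu_cons, mu_cons]
      omega
    · rw [hpe]; exact head?_append_cons l a _ _
    · rw [hpe, List.getLast?_append_of_ne_nil (l₁ := l) (by simp),
        List.getLast?_append_of_ne_nil (l₁ := l) (by simp)]
      simp

end VP

namespace VP

variable {V : Type*} {E₁ E₂ : V → V → Prop}

lemma lt_of_getElem?_eq_some {l : List V} {k : ℕ} {x : V} (h : l[k]? = some x) :
    k < l.length := by
  by_contra hc
  rw [List.getElem?_eq_none (by omega)] at h
  exact absurd h.symm (Option.some_ne_none _)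

set_option maxHeartbeats 1000000 in
lemma transfer (hadj : ∀ u v, Adj E₁ u v ↔ Adj E₂ u v)
    (hvs : ∀ u m v, VStruct E₁ u m v ↔ VStruct E₂ u m v)
    (h₁ : IsDAG E₁) (h₂ : IsDAG E₂) (Z : Set V) :
    ∀ (N : ℕ) (p : List V), mu E₂ Z p ≤ N → IsPath E₂ p → ActI E₂ Z p →
      ∃ q, IsPath E₁ q ∧ ActI E₁ Z q ∧ q.head? = p.head? ∧ q.getLast? = p.getLast? := by
  intro N
  induction N with
  | zero =>
    intro p hmu hp hA
    cases p with
    | nil =>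
      exact ⟨[], ⟨List.nodup_nil, List.isChain_nil⟩, fun i a m b h _ _ => by simp at h, rfl, rfl⟩
    | cons x t =>
      exact absurd hmu (by have := mu_pos (E := E₂) (Z := Z) (p := x :: t) (by simp); omega)
  | succ N ih =>
    intro p hmu hp hA
    by_cases hB : ActI E₁ Z p
    · exact ⟨p, ⟨hp.1, hp.2.imp fun a b h => (hadj a b).mpr h⟩, hB, rfl, rfl⟩
    obtain ⟨i, a, m, b, hia, him, hib, hnt⟩ := not_actI hB
    obtain ⟨l, r, hpe, hli⟩ := decomp hia him hib
    have hT2 : TOK E₂ Z a m b := hA i a m b hia him hib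
    -- basic distinctness facts
    have htriple : List.Sublist [a, m, b] p := by
      rw [hpe]
      refine List.Sublist.trans ?_ (List.sublist_append_right l _)
      have : List.take 3 (a :: m :: b :: r) = [a, m, b] := rfl
      exact this ▸ List.take_sublist 3 (a :: m :: b :: r)
    have hndt : ([a, m, b] : List V).Nodup := htriple.nodup hp.1
    have hab : a ≠ b := by simp at hndt; tauto
    have ham : a ≠ m := by simp at hndt; tauto
    have hmb : m ≠ b := by simp at hndt; tauto
    -- old-window helpers
    have hTprev : ∀ x, l[l.length - 1]? = some x → TOK E₂ Z x a m := by
      intro x hx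
      have hll : l.length - 1 < l.length := lt_of_getElem?_eq_some hx
      have h1i : 1 ≤ i := by omega
      refine hA (i - 1) x a m ?_ ?_ ?_
      · rw [hpe, idx_left (by omega), show i - 1 = l.length - 1 by omega]; exact hx
      · rw [show i - 1 + 1 = i by omega]; exact hia
      · rw [show i - 1 + 2 = i + 1 by omega]; exact him
    have hTprev2 : ∀ x y, l[l.length - 2]? = some x → l[l.length - 1]? = some y →
        2 ≤ l.length → TOK E₂ Z x y a := by
      intro x y hx hy h2l
      refine hA (i - 2) x y a ?_ ?_ ?_
      · rw [hpe, idx_left (by omega), show i - 2 = l.length - 2 by omega]; exact hx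
      · rw [hpe, show i - 2 + 1 = l.length - 1 by omega, idx_left (by omega)]; exact hy
      · rw [show i - 2 + 2 = i by omega]; exact hia
    have hTnext : ∀ w, r[0]? = some w → TOK E₂ Z m b w := by
      intro w hw
      refine hA (i + 1) m b w him hib ?_
      rw [hpe, show i + 1 + 2 = l.length + 3 by omega, idx_right]
      simpa using hw
    have hTnext2 : ∀ w w', r[0]? = some w → r[1]? = some w' → TOK E₂ Z b w w' := by
      intro w w' hw hw'
      refine hA (i + 2) b w w' hib ?_ ?_
      · rw [hpe, show i + 2 + 1 = l.length + 3 by omega, idx_right]; simpa using hw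
      · rw [hpe, show i + 2 + 2 = l.length + 4 by omega, idx_right]; simpa using hw'
    -- finisher
    have fin : ∀ q₂ : List V, IsPath E₂ q₂ → ActI E₂ Z q₂ → mu E₂ Z q₂ < mu E₂ Z p →
        q₂.head? = p.head? → q₂.getLast? = p.getLast? →
        ∃ q, IsPath E₁ q ∧ ActI E₁ Z q ∧ q.head? = p.head? ∧ q.getLast? = p.getLast? := by
      intro q₂ hq1 hq2 hq3 hq4 hq5
      obtain ⟨q, hqa, hqb, hqc, hqd⟩ := ih q₂ (by omega) hq1 hq2
      exact ⟨q, hqa, hqb, hqc.trans hq4, hqd.trans hq5⟩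
    by_cases hcol1 : E₁ a m ∧ E₁ b m
    · -- CASE beta : m is a collider in E1 with no E1-descendant in Z
      have hnd1 : ∀ d, Relation.ReflTransGen E₁ m d → d ∉ Z := by
        intro d hd hdZ
        exact hnt ⟨fun _ => ⟨d, hd, hdZ⟩, fun hn => absurd hcol1 hn⟩
      have hmnZ : m ∉ Z := hnd1 m Relation.ReflTransGen.refl
      by_cases hcol2 : E₂ a m ∧ E₂ b m
      · -- beta1 : collider in both graphs
        obtain ⟨c, hmc2, hac2, hbc2, hcd, hphic⟩ :=
          b1 hadj hvs h₁ h₂ Z hcol2.1 hcol2.2 hcol1.1 hcol1.2 (hT2.1 hcol2) hnd1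
        by_cases hcp : c ∈ p
        · -- c already occurs on the path: shortcut
          obtain ⟨t, ht⟩ := List.mem_iff_getElem?.mp hcp
          have htlen : t < p.length := lt_of_getElem?_eq_some ht
          have hilen : i + 2 < p.length := by
            have := lt_of_getElem?_eq_some hib; omega
          have hca : c ≠ a := fun h => dag_irrefl h₂ a (by rw [h] at hac2; exact hac2)
          have hcm : c ≠ m := fun h => dag_irrefl h₂ m (by rw [h] at hmc2; exact hmc2)
          have hcb : c ≠ b := fun h => dag_irrefl h₂ b (by rw [h] at hbc2; exact hbc2)
          have htrange : t < i ∨ i + 2 < t := by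
            by_contra hcon
            push_neg at hcon
            have h3 : t = i ∨ t = i + 1 ∨ t = i + 2 := by omega
            rcases h3 with h3 | h3 | h3 <;> subst h3
            · rw [ht] at hia; exact hca (by simpa using hia)
            · rw [ht] at him; exact hcm (by simpa using him)
            · rw [ht] at hib; exact hcb (by simpa using hib)
          rcases htrange with htlt | htgt
          · -- cut-left: q = p.take (t+1) ++ p.drop (i+1)
            have es : p.drop (i + 1) = m :: b :: r := by
              rw [hpe, show i + 1 = l.length + 1 by omega, List.drop_append]
              simp
            have e3 : (p.drop (t + 1)).drop (i - t) = p.drop (i + 1) := by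
              rw [List.drop_drop]
              congr 1
              omega
            have hpeC : p = p.take (t + 1) ++
                ((p.drop (t + 1)).take (i - t) ++ p.drop (i + 1)) := by
              conv_lhs => rw [← List.take_append_drop (t + 1) p]
              congr 1
              conv_lhs => rw [← List.take_append_drop (i - t) (p.drop (t + 1))]
              rw [e3]
            have hlt : (p.take (t + 1)).length = t + 1 := by
              simp [List.length_take]
              omega
            have hlne : p.take (t + 1) ≠ [] := by
              intro hcon
              apply_fun List.length at hcon
              rw [hlt] at hcon
              simp at hcon
            have hmidne : (p.drop (t + 1)).take (i - t) ≠ [] := by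
              intro hcon
              apply_fun List.length at hcon
              simp [List.length_take, List.length_drop] at hcon
              omega
            have hgl : (p.take (t + 1))[(p.take (t + 1)).length - 1]? = some c := by
              rw [hlt, show t + 1 - 1 = t by omega, List.getElem?_take_of_lt (by omega)]
              exact ht
            obtain ⟨hq1, hq2, hq3, hq4, hq5⟩ := surgery_delete (E := E₂) (Z := Z) hpeC
              hlne (by rw [es]; simp) hmidne hp hA
              (by
                intro x y hx hy
                rw [List.getLast?_eq_getElem?] at hx
                rw [hgl] at hx
                have hx' : c = x := by simpa using hx
                have hy' : m = y := by rw [es] at hy; simpa using hy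
                subst hx'; subst hy'
                exact Or.inr hmc2)
              (by
                intro x y z h2 hx hy hz
                rw [hlt] at h2 hx hy
                have hy' : c = y := by
                  rw [show t + 1 - 1 = t by omega, List.getElem?_take_of_lt (by omega),
                    ht] at hy
                  simpa using hy
                have hz' : m = z := by rw [es] at hz; simpa using hz
                have hx' : p[t - 1]? = some x := by
                  rw [show t + 1 - 2 = t - 1 by omega,
                    List.getElem?_take_of_lt (by omega)] at hx
                  exact hx
                subst hy'; subst hz'
                refine ⟨fun _ => hcd, fun hnc => ?_⟩
                by_contra hcZ
                have hwex : p[t + 1]? = some (p[t + 1]'(by omega)) :=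
                  List.getElem?_eq_getElem (by omega)
                have hold := hA (t - 1) x c (p[t + 1]'(by omega)) hx'
                  (by rw [show t - 1 + 1 = t by omega]; exact ht)
                  (by rw [show t - 1 + 2 = t + 1 by omega]; exact hwex)
                exact (hold.2 (fun hc' => hnc ⟨hc'.1, hmc2⟩)) hcZ)
              (by
                intro y z w h1 hy hz hw
                rw [hgl] at hy
                have hy' : c = y := by simpa using hy
                have hz' : m = z := by rw [es] at hz; simpa using hz
                have hw' : b = w := by rw [es] at hw; simpa using hw
                subst hy'; subst hz'; subst hw'
                exact ⟨fun hc' => (dag_no2 h₂ hmc2 hc'.1).elim, fun _ => hmnZ⟩)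
            exact fin _ hq1 hq2 hq3 hq4 hq5
          · -- cut-right: q = p.take (i+2) ++ p.drop t
            have e2 : p.take (i + 2) = l ++ [a, m] := by
              rw [hpe, show i + 2 = l.length + 2 by omega, List.take_append]
              simp
            have e3 : (p.drop (i + 2)).drop (t - (i + 2)) = p.drop t := by
              rw [List.drop_drop]
              congr 1
              omega
            have hpeC : p = (l ++ [a, m]) ++
                ((p.drop (i + 2)).take (t - (i + 2)) ++ p.drop t) := by
              conv_lhs => rw [← List.take_append_drop (i + 2) p]
              rw [e2]
              congr 1
              conv_lhs => rw [← List.take_append_drop (t - (i + 2)) (p.drop (i + 2))]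
              rw [e3]
            have hmidne : (p.drop (i + 2)).take (t - (i + 2)) ≠ [] := by
              intro hcon
              apply_fun List.length at hcon
              simp [List.length_take, List.length_drop] at hcon
              omega
            have hsne : p.drop t ≠ [] := by
              intro hcon
              apply_fun List.length at hcon
              simp at hcon
              omega
            have hdt0 : (p.drop t)[0]? = some c := by
              rw [List.getElem?_drop]
              simpa using ht
            obtain ⟨hq1, hq2, hq3, hq4, hq5⟩ := surgery_delete (E := E₂) (Z := Z) hpeC
              (by simp) hsne hmidne hp hA
              (by
                intro x y hx hy
                rw [show l ++ [a, m] = (l ++ [a]) ++ [m] by simp, List.getLast?_concat] at hx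
                have hx' : m = x := by simpa using hx
                have hy' : c = y := by
                  rw [List.head?_drop] at hy
                  rw [ht] at hy
                  simpa using hy
                subst hx'; subst hy'
                exact Or.inl hmc2)
              (by
                intro x y z h2 hx hy hz
                simp only [List.length_append, List.length_cons, List.length_nil] at h2 hx hy
                have hx' : a = x := by
                  rw [show l.length + 2 - 2 = l.length + 0 by omega, idx_right] at hx
                  simpa using hx
                have hy' : m = y := by
                  rw [show l.length + 2 - 1 = l.length + 1 by omega, idx_right] at hy
                  simpa using hy
                have hz' : c = z := by
                  rw [hdt0] at hz
                  simpa using hz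
                subst hx'; subst hy'; subst hz'
                exact ⟨fun hc' => (dag_no2 h₂ hmc2 hc'.2).elim, fun _ => hmnZ⟩)
              (by
                intro y z w h1 hy hz hw
                simp only [List.length_append, List.length_cons, List.length_nil] at h1 hy
                have hy' : m = y := by
                  rw [show l.length + 2 - 1 = l.length + 1 by omega, idx_right] at hy
                  simpa using hy
                have hz' : c = z := by
                  rw [hdt0] at hz
                  simpa using hz
                have hw' : p[t + 1]? = some w := by
                  rw [List.getElem?_drop] at hw
                  simpa using hw
                subst hy'; subst hz'
                refine ⟨fun _ => hcd, fun hnc => ?_⟩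
                by_contra hcZ
                have hx'' : p[t - 1]? = some (p[t - 1]'(by omega)) :=
                  List.getElem?_eq_getElem (by omega)
                have hold := hA (t - 1) (p[t - 1]'(by omega)) c w hx''
                  (by rw [show t - 1 + 1 = t by omega]; exact ht)
                  (by rw [show t - 1 + 2 = t + 1 by omega]; exact hw')
                exact (hold.2 (fun hc' => hnc ⟨hmc2, hc'.2⟩)) hcZ)
            exact fin _ hq1 hq2 hq3 hq4 hq5
        · -- c fresh: replace m by c
          obtain ⟨hq1, hq2, hq3, hq4, hq5⟩ := surgery_replace (E := E₂) (Z := Z) hpe hp hA hcp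
            (Or.inl hac2) (Or.inr hbc2) hphic
            (by
              intro x hx
              refine ⟨fun hc' => (dag_no2 h₂ hac2 hc'.2).elim, fun _ => ?_⟩
              exact (hTprev x hx).2 (fun hc' => dag_no2 h₂ hcol2.1 hc'.2)
            )
            ⟨fun _ => hcd, fun hn => absurd ⟨hac2, hbc2⟩ hn⟩
            (by
              intro w hw
              refine ⟨fun hc' => (dag_no2 h₂ hbc2 hc'.1).elim, fun _ => ?_⟩
              have hw' : r[0]? = some w := by simpa using hw
              exact (hTnext w hw').2 (fun hc' => dag_no2 h₂ hcol2.2 hc'.1))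
          exact fin _ hq1 hq2 hq3 hq4 hq5
      · -- beta2 : collider in E1 only; a and b are adjacent
        have hadj2ab : Adj E₂ a b := status_adj hadj hvs hcol1 hcol2 hab
        have hAam : E₂ a m ∨ E₂ m a := (hadj a m).mp (Or.inl hcol1.1)
        have hAbm : E₂ b m ∨ E₂ m b := (hadj b m).mp (Or.inl hcol1.2)
        by_cases hbadA : a ∈ Z ∧ l ≠ [] ∧ E₂ a b
        · -- splice out a
          obtain ⟨haZ, hlnn, hab2⟩ := hbadA
          have hllen : 1 ≤ l.length := by
            cases l with
            | nil => exact absurd rfl hlnn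
            | cons _ _ => simp
          obtain ⟨x, hx⟩ : ∃ x, l[l.length - 1]? = some x :=
            ⟨_, List.getElem?_eq_getElem (by omega)⟩
          have hcolxa : E₂ x a ∧ E₂ m a := by
            by_contra hc
            exact (hTprev x hx).2 hc haZ
          have hxm : x ≠ m := by
            have hdisj := List.disjoint_of_nodup_append (hpe ▸ hp.1)
            intro hcon
            exact hdisj (List.mem_of_getElem? hx) (by rw [hcon]; simp)
          have hadjxm : Adj E₂ x m := by
            by_contra hna
            have hv1 := (hvs x a m).mpr ⟨hcolxa.1, hcolxa.2, hxm, hna⟩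
            exact dag_no2 h₁ hcol1.1 hv1.2.1
          have hpeA : p = l ++ ([a] ++ (m :: b :: r)) := by rw [hpe]; rfl
          obtain ⟨hq1, hq2, hq3, hq4, hq5⟩ := surgery_delete (E := E₂) (Z := Z) hpeA
            hlnn (by simp) (by simp) hp hA
            (by
              intro x0 y hx0 hy
              rw [List.getLast?_eq_getElem?, hx] at hx0
              have hx0' : x = x0 := by simpa using hx0
              have hy' : m = y := by simpa using hy
              subst hx0'; subst hy'
              exact hadjxm)
            (by
              intro x0 y z h2 hx0 hy hz
              have hy' : x = y := by rw [hx] at hy; simpa using hy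
              have hz' : m = z := by simpa using hz
              subst hy'; subst hz'
              refine ⟨fun _ => ⟨a, Relation.ReflTransGen.single hcolxa.1, haZ⟩, fun _ => ?_⟩
              exact (hTprev2 x0 x hx0 hx h2).2 (fun hc' => dag_no2 h₂ hcolxa.1 hc'.2))
            (by
              intro y z w h1 hy hz hw
              have hy' : x = y := by rw [hx] at hy; simpa using hy
              have hz' : m = z := by simpa using hz
              have hw' : b = w := by simpa using hw
              subst hy'; subst hz'; subst hw'
              exact ⟨fun _ => ⟨a, Relation.ReflTransGen.single hcolxa.2, haZ⟩, fun _ => hmnZ⟩)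
          exact fin _ hq1 hq2 hq3 hq4 hq5
        · by_cases hbadB : b ∈ Z ∧ r ≠ [] ∧ E₂ b a
          · -- splice out b
            obtain ⟨hbZ, hrnn, hba2⟩ := hbadB
            cases r with
            | nil => exact absurd rfl hrnn
            | cons w0 r' =>
            have hcolb : E₂ m b ∧ E₂ w0 b := by
              by_contra hc
              exact (hTnext w0 (by simp)).2 hc hbZ
            have hmw0 : m ≠ w0 := by
              have hnd2 : (a :: m :: b :: w0 :: r').Nodup := (hpe ▸ hp.1).of_append_right
              simp only [List.nodup_cons, List.mem_cons] at hnd2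
              tauto
            have hadjmw0 : Adj E₂ m w0 := by
              by_contra hna
              have hv1 := (hvs m b w0).mpr ⟨hcolb.1, hcolb.2, hmw0, hna⟩
              exact dag_no2 h₁ hcol1.2 hv1.1
            have hpeB : p = (l ++ [a, m]) ++ ([b] ++ (w0 :: r')) := by rw [hpe]; simp
            obtain ⟨hq1, hq2, hq3, hq4, hq5⟩ := surgery_delete (E := E₂) (Z := Z) hpeB
              (by simp) (by simp) (by simp) hp hA
              (by
                intro x y hx hy
                rw [show l ++ [a, m] = (l ++ [a]) ++ [m] by simp, List.getLast?_concat] at hx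
                have hx' : m = x := by simpa using hx
                have hy' : w0 = y := by simpa using hy
                subst hx'; subst hy'
                exact hadjmw0)
              (by
                intro x y z h2 hx hy hz
                simp only [List.length_append, List.length_cons, List.length_nil] at h2 hx hy
                have hx' : a = x := by
                  rw [show l.length + 2 - 2 = l.length + 0 by omega, idx_right] at hx
                  simpa using hx
                have hy' : m = y := by
                  rw [show l.length + 2 - 1 = l.length + 1 by omega, idx_right] at hy
                  simpa using hy
                have hz' : w0 = z := by simpa using hz
                subst hx'; subst hy'; subst hz'
                exact ⟨fun _ => ⟨b, Relation.ReflTransGen.single hcolb.1, hbZ⟩, fun _ => hmnZ⟩)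
              (by
                intro y z w h1 hy hz hw
                simp only [List.length_append, List.length_cons, List.length_nil] at h1 hy
                have hy' : m = y := by
                  rw [show l.length + 2 - 1 = l.length + 1 by omega, idx_right] at hy
                  simpa using hy
                have hz' : w0 = z := by simpa using hz
                have hw2 : (w0 :: r')[1]? = some w := by simpa using hw
                subst hy'; subst hz'
                refine ⟨fun _ => ⟨b, Relation.ReflTransGen.single hcolb.2, hbZ⟩, fun _ => ?_⟩
                exact (hTnext2 w0 w (by simp) (by simpa using hw2)).2
                  (fun hc' => dag_no2 h₂ hcolb.2 hc'.1))
            exact fin _ hq1 hq2 hq3 hq4 hq5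
          · -- splice out m
            have hpeM : p = (l ++ [a]) ++ ([m] ++ (b :: r)) := by rw [hpe]; simp
            obtain ⟨hq1, hq2, hq3, hq4, hq5⟩ := surgery_delete (E := E₂) (Z := Z) hpeM
              (by simp) (by simp) (by simp) hp hA
              (by
                intro x y hx hy
                rw [List.getLast?_concat] at hx
                have hx' : x = a := by simpa using hx.symm
                have hy' : y = b := by simpa using hy.symm
                subst hx'; subst hy'
                exact hadj2ab)
              (by
                intro x y z h2 hx hy hz
                simp only [List.length_append, List.length_cons, List.length_nil] at h2 hx hy
                have hx' : l[l.length - 1]? = some x := by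
                  rw [show l.length + 1 - 2 = l.length - 1 by omega,
                    idx_left (by omega)] at hx
                  exact hx
                have hy' : a = y := by
                  rw [show l.length + 1 - 1 = l.length + 0 by omega, idx_right] at hy
                  simpa using hy
                have hz' : b = z := by simpa using hz
                subst hy'; subst hz'
                constructor
                · rintro ⟨hxa, hba'⟩
                  rcases hAam with ham2 | hma2
                  · have hmb2 : E₂ m b := by
                      rcases hAbm with h' | h'
                      · exact absurd ⟨ham2, h'⟩ hcol2
                      · exact h'
                    exact (dag_no3 h₂ ham2 hmb2 hba').elim
                  · exact (hTprev x hx').1 ⟨hxa, hma2⟩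
                · intro hnc
                  by_contra haZ
                  have hcolxa : E₂ x a ∧ E₂ m a := by
                    by_contra hc
                    exact (hTprev x hx').2 hc haZ
                  have hab2 : E₂ a b := by
                    rcases hadj2ab with h' | h'
                    · exact h'
                    · exact absurd ⟨hcolxa.1, h'⟩ hnc
                  exact hbadA ⟨haZ, (by
                    rintro rfl
                    simp at hx'), hab2⟩)
              (by
                intro y z w h1 hy hz hw
                simp only [List.length_append, List.length_cons, List.length_nil] at h1 hy
                have hy' : a = y := by
                  rw [show l.length + 1 - 1 = l.length + 0 by omega, idx_right] at hy
                  simpa using hy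
                have hz' : b = z := by simpa using hz
                have hw' : r[0]? = some w := by simpa using hw
                subst hy'; subst hz'
                constructor
                · rintro ⟨hab', hwb⟩
                  rcases hAbm with hbm2 | hmb2
                  · have hma2 : E₂ m a := by
                      rcases hAam with h' | h'
                      · exact absurd ⟨h', hbm2⟩ hcol2
                      · exact h'
                    exact (dag_no3 h₂ hab' hbm2 hma2).elim
                  · exact (hTnext w hw').1 ⟨hmb2, hwb⟩
                · intro hnc
                  by_contra hbZ
                  have hcolb : E₂ m b ∧ E₂ w b := by
                    by_contra hc
                    exact (hTnext w hw').2 hc hbZ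
                  have hba2 : E₂ b a := by
                    rcases hadj2ab with h' | h'
                    · exact absurd ⟨h', hcolb.2⟩ hnc
                    · exact h'
                  exact hbadB ⟨hbZ, (by
                    rintro rfl
                    simp at hw'), hba2⟩)
            exact fin _ hq1 hq2 hq3 hq4 hq5
    · -- CASE alpha : m is a collider in E2 only, and m ∈ Z
      have hmZ : m ∈ Z := by
        by_contra hmz
        exact hnt ⟨fun hc => absurd hc hcol1, fun _ => hmz⟩
      have hcol2 : E₂ a m ∧ E₂ b m := by
        by_contra hc
        exact (hT2.2 hc) hmZ
      have hadj1ab : Adj E₁ a b :=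
        status_adj (fun u v => (hadj u v).symm) (fun u m v => (hvs u m v).symm) hcol2 hcol1 hab
      have hadj2ab : Adj E₂ a b := (hadj a b).mp hadj1ab
      have hpeM : p = (l ++ [a]) ++ ([m] ++ (b :: r)) := by rw [hpe]; simp
      obtain ⟨hq1, hq2, hq3, hq4, hq5⟩ := surgery_delete (E := E₂) (Z := Z) hpeM (by simp)
        (by simp) (by simp) hp hA
        (by
          intro x y hx hy
          rw [List.getLast?_concat] at hx
          have hx' : x = a := by simpa using hx.symm
          have hy' : y = b := by simpa using hy.symm
          subst hx'; subst hy'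
          exact hadj2ab)
        (by
          intro x y z h2 hx hy hz
          simp only [List.length_append, List.length_cons, List.length_nil] at h2 hx hy
          have hx' : l[l.length - 1]? = some x := by
            rw [show l.length + 1 - 2 = l.length - 1 by omega,
              idx_left (by omega)] at hx
            exact hx
          have hy' : y = a := by
            rw [show l.length + 1 - 1 = l.length + 0 by omega, idx_right] at hy
            simpa using hy.symm
          have hz' : z = b := by simpa using hz.symm
          subst hy'; subst hz'
          exact ⟨fun _ => ⟨m, Relation.ReflTransGen.single hcol2.1, hmZ⟩,
            fun _ => (hTprev x hx').2 (fun hc => dag_no2 h₂ hcol2.1 hc.2)⟩)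
        (by
          intro y z w h1 hy hz hw
          simp only [List.length_append, List.length_cons, List.length_nil] at h1 hy
          have hy' : y = a := by
            rw [show l.length + 1 - 1 = l.length + 0 by omega, idx_right] at hy
            simpa using hy.symm
          have hz' : z = b := by simpa using hz.symm
          have hw' : r[0]? = some w := by simpa using hw
          subst hy'; subst hz'
          exact ⟨fun _ => ⟨m, Relation.ReflTransGen.single hcol2.2, hmZ⟩,
            fun _ => (hTnext w hw').2 (fun hc => dag_no2 h₂ hcol2.2 hc.1)⟩)
      exact fin _ hq1 hq2 hq3 hq4 hq5

end VP

namespace VP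

variable {V : Type*} {E₁ E₂ : V → V → Prop}

lemma dsep_transfer (hadj : ∀ u v, Adj E₁ u v ↔ Adj E₂ u v)
    (hvs : ∀ u m v, VStruct E₁ u m v ↔ VStruct E₂ u m v)
    (h₁ : IsDAG E₁) (h₂ : IsDAG E₂) {X Y Z : Set V}
    (h : DSep E₁ X Y Z) : DSep E₂ X Y Z := by
  intro p hp hx hy
  by_contra hb
  have hact : ActI E₂ Z p := not_blocked_iff.mp hb
  obtain ⟨q, hq1, hq2, hq3, hq4⟩ :=
    transfer hadj hvs h₁ h₂ Z (mu E₂ Z p) p le_rfl hp hact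
  obtain ⟨x, hxX, hxh⟩ := hx
  obtain ⟨y, hyY, hyl⟩ := hy
  have hbl := h q hq1 ⟨x, hxX, by rw [hq3]; exact hxh⟩ ⟨y, hyY, by rw [hq4]; exact hyl⟩
  exact (not_blocked_iff.mpr hq2) hbl

end VP

/-- Theorem 1 (Verma–Pearl): two DAGs on the same finite vertex set are Markov equivalent
if and only if they have the same skeleton and the same set of v-structures. -/
theorem stmt_11 {V : Type*} [Finite V] (E₁ E₂ : V → V → Prop)
    (h₁ : IsDAG E₁) (h₂ : IsDAG E₂) :
    MarkovEquiv E₁ E₂ ↔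
      ((∀ u v, Adj E₁ u v ↔ Adj E₂ u v) ∧
        (∀ u m v, VStruct E₁ u m v ↔ VStruct E₂ u m v)) := by
  constructor
  · intro hme
    have hskel : ∀ u v, Adj E₁ u v ↔ Adj E₂ u v := fun u v =>
      ⟨VP.adj_transfer hme h₁ h₂, VP.adj_transfer (VP.me_symm hme) h₂ h₁⟩
    refine ⟨hskel, fun u m v =>
      ⟨VP.vstruct_transfer hme h₁ h₂ hskel,
       VP.vstruct_transfer (VP.me_symm hme) h₂ h₁ (fun u v => (hskel u v).symm)⟩⟩
  · rintro ⟨hadj, hvs⟩ X Y Z _ _ _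
    constructor
    · exact fun h => VP.dsep_transfer hadj hvs h₁ h₂ h
    · exact fun h => VP.dsep_transfer (fun u v => (hadj u v).symm)
        (fun u m v => (hvs u m v).symm) h₂ h₁ h
end

section
/- (Adjacency is determined by d-separation.) Let G be a DAG on a finite vertex set V and let u ≠ v be vertices. Then u and v are adjacent in G if and only if there is no set Z ⊆ V \ {u, v} such that {u} and {v} are d-separated by Z in G. -/
section AuxProofs

variable {V : Type*}

lemma gci (p : List V) {i j : ℕ} (hij : i = j) {hi : i < p.length} :
    p[i]'hi = p[j]'(hij ▸ hi) := by subst hij; rfl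

lemma key {E : V → V → Prop} (h : IsDAG E) {u v : V} (hna : ¬ Adj E u v) (huv : u ≠ v)
    (hnd : ¬ Relation.ReflTransGen E v u) : DSep E {u} {v} {w | E w v} := by
  intro p hp hh hl
  obtain ⟨x, hx, hhead⟩ := hh; obtain ⟨y, hy, hlast⟩ := hl
  rw [Set.mem_singleton_iff] at hx hy
  rw [hx] at hhead; rw [hy] at hlast; clear hx hy x y
  rw [List.head?_eq_getElem?] at hhead
  rw [List.getLast?_eq_getElem?] at hlast
  set n := p.length with hn
  have hn1 : 0 < n := by
    by_contra hc
    rw [List.getElem?_eq_none (by omega)] at hhead; cases hhead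
  have h0 : p[0] = u := by
    rw [List.getElem?_eq_getElem hn1] at hhead; exact Option.some.inj hhead
  have hlst : p[n-1]'(by omega) = v := by
    rw [List.getElem?_eq_getElem (by omega)] at hlast; exact Option.some.inj hlast
  have hch : ∀ i, ∀ hi : i + 1 < n, Adj E (p[i]'(by omega)) (p[i+1]'hi) := by
    have := List.isChain_iff_getElem.mp hp.2
    intro i hi
    simpa using this i (by omega)
  have hn2 : 2 ≤ n := by
    by_contra hc
    have h1 : p[0] = p[n-1]'(by omega) := gci p (by omega)
    exact huv (h0 ▸ h1 ▸ hlst)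
  have hn3 : 3 ≤ n := by
    by_contra hc
    have := hch 0 (by omega)
    rw [h0, (gci p (show 0+1 = n-1 by omega)).trans hlst] at this
    exact absurd this hna
  have hsome : ∀ {i : ℕ} (hi : i < n), p[i]? = some (p[i]'hi) := fun hi =>
    List.getElem?_eq_getElem hi
  rcases hch (n-2) (by omega) with hA | hB
  · -- edge p[n-2] → p[n-1] = v : non-collider in Z
    have hA' : E (p[n-2]'(by omega)) v := by
      rw [(gci p (show n-2+1 = n-1 by omega)).trans hlst] at hA
      exact hA
    refine Or.inl ⟨n-3, p[n-3]'(by omega), p[n-2]'(by omega), p[n-1]'(by omega), ?_, ?_, ?_, ?_, hA'⟩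
    · exact hsome (by omega)
    · rw [show n-3+1 = n-2 by omega]; exact hsome (by omega)
    · rw [show n-3+2 = n-1 by omega]; exact hsome (by omega)
    · rintro ⟨-, hbm⟩
      rw [hlst] at hbm
      exact h _ (Relation.TransGen.head hA' (Relation.TransGen.single hbm))
  · -- edge v = p[n-1] → p[n-2] : walk backwards
    have hB' : E v (p[n-2]'(by omega)) := by
      rw [(gci p (show n-2+1 = n-1 by omega)).trans hlst] at hB
      exact hB
    have claim : ∀ d : ℕ, Blocked E {w | E w v} p ∨
        ∃ (a b : V), p[n-2-d]? = some a ∧ p[n-2-d+1]? = some b ∧ E b a ∧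
          Relation.ReflTransGen E v a := by
      intro d
      induction d with
      | zero =>
        refine Or.inr ⟨p[n-2]'(by omega), v, hsome (by omega), ?_, hB', Relation.ReflTransGen.single hB'⟩
        rw [show n-2-0+1 = n-1 by omega, hsome (by omega), hlst]
      | succ d ih =>
        rcases ih with hbl | ⟨a, b, ha, hb, hedge, hrtg⟩
        · exact Or.inl hbl
        rcases Nat.eq_zero_or_pos (n - 2 - d) with hz | hpos
        · rw [show n-2-(d+1) = n-2-d by omega]
          exact Or.inr ⟨a, b, ha, hb, hedge, hrtg⟩
        have hii : (n-2-(d+1)) + 1 = n - 2 - d := by omega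
        have hilt : (n-2-(d+1)) + 1 < n := by omega
        have haeq : a = p[(n-2-(d+1))+1]'hilt := by
          have ha' : p[(n-2-(d+1))+1]? = some a := by rw [hii]; exact ha
          rw [hsome hilt] at ha'
          exact (Option.some.inj ha').symm
        rcases hch (n-2-(d+1)) hilt with hfwd | hback
        · -- E p[i] p[i+1] : collider at p[i+1]
          refine Or.inl (Or.inr ⟨n-2-(d+1), p[n-2-(d+1)]'(by omega), p[(n-2-(d+1))+1]'hilt, b,
            hsome (by omega), hsome (by omega), ?_, hfwd, haeq ▸ hedge, ?_⟩)
          · rw [show (n-2-(d+1))+2 = n-2-d+1 by omega]; exact hb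
          · intro dd hdd hddZ
            have hvd : Relation.ReflTransGen E v dd :=
              Relation.ReflTransGen.trans (haeq ▸ hrtg) hdd
            exact h v (Relation.TransGen.tail' hvd hddZ)
        · -- E p[i+1] p[i] : extend
          refine Or.inr ⟨p[n-2-(d+1)]'(by omega), p[(n-2-(d+1))+1]'hilt,
            hsome (by omega), hsome (by omega), hback, ?_⟩
          exact Relation.ReflTransGen.tail (haeq ▸ hrtg) hback
    rcases claim (n-2) with hbl | ⟨a, b, ha, _, _, hrtg⟩
    · exact hbl
    · exfalso
      rw [show n-2-(n-2) = 0 by omega, hsome (by omega), h0] at ha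
      exact hnd ((Option.some.inj ha) ▸ hrtg)

lemma blocked_of_reverse {E : V → V → Prop} {Z : Set V} {p : List V}
    (hb : Blocked E Z p.reverse) : Blocked E Z p := by
  have tr : ∀ {i : ℕ} {a m b : V}, p.reverse[i]? = some a → p.reverse[i+1]? = some m →
      p.reverse[i+2]? = some b →
      ∃ j, p[j]? = some b ∧ p[j+1]? = some m ∧ p[j+2]? = some a := by
    intro i a m b h1 h2 h3
    have hn : i + 2 < p.length := by
      by_contra hc
      rw [List.getElem?_eq_none (by simpa using le_of_not_gt hc)] at h3
      cases h3
    refine ⟨p.length - 3 - i, ?_, ?_, ?_⟩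
    · rw [List.getElem?_reverse (by omega)] at h3
      rw [show p.length - 3 - i = p.length - 1 - (i+2) by omega]; exact h3
    · rw [List.getElem?_reverse (by omega)] at h2
      rw [show p.length - 3 - i + 1 = p.length - 1 - (i+1) by omega]; exact h2
    · rw [List.getElem?_reverse (by omega)] at h1
      rw [show p.length - 3 - i + 2 = p.length - 1 - i by omega]; exact h1
  rcases hb with ⟨i, a, m, b, h1, h2, h3, h4, h5⟩ | ⟨i, a, m, b, h1, h2, h3, h4, h5, h6⟩
  · obtain ⟨j, g1, g2, g3⟩ := tr h1 h2 h3
    exact Or.inl ⟨j, b, m, a, g1, g2, g3, fun hc => h4 ⟨hc.2, hc.1⟩, h5⟩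
  · obtain ⟨j, g1, g2, g3⟩ := tr h1 h2 h3
    exact Or.inr ⟨j, b, m, a, g1, g2, g3, h5, h4, h6⟩

lemma dsep_symm {E : V → V → Prop} {a b : V} {Z : Set V} (h : DSep E {a} {b} Z) :
    DSep E {b} {a} Z := by
  intro p hp hh hl
  obtain ⟨x, hx, hhead⟩ := hh; obtain ⟨y, hy, hlast⟩ := hl
  rw [Set.mem_singleton_iff] at hx hy
  rw [hx] at hhead; rw [hy] at hlast
  have hp' : IsPath E p.reverse := by
    refine ⟨List.nodup_reverse.mpr hp.1, List.isChain_reverse.mpr ?_⟩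
    exact hp.2.imp (fun x y hxy => hxy.symm)
  have hbk := h p.reverse hp' ⟨a, rfl, by rw [List.head?_reverse]; exact hlast⟩
    ⟨b, rfl, by rw [List.getLast?_reverse]; exact hhead⟩
  exact blocked_of_reverse hbk

end AuxProofs

/-- Adjacency is determined by d-separation: in a DAG on a finite vertex set, distinct
vertices `u` and `v` are adjacent if and only if there is no set `Z ⊆ V \ {u, v}` that
d-separates `{u}` from `{v}`. -/

theorem stmt_12 {V : Type*} [Finite V] (E : V → V → Prop) (h : IsDAG E)
    (u v : V) (huv : u ≠ v) :
    Adj E u v ↔ ¬ ∃ Z : Set V, u ∉ Z ∧ v ∉ Z ∧ DSep E {u} {v} Z := by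
  constructor
  · rintro hadj ⟨Z, hu, hv, hd⟩
    have hpath : IsPath E [u, v] := ⟨by simp [huv], List.isChain_pair.mpr hadj⟩
    have hb := hd [u, v] hpath ⟨u, rfl, rfl⟩ ⟨v, rfl, by simp⟩
    have hnone : ∀ i : ℕ, ([u, v] : List V)[i + 2]? = none := fun i =>
      List.getElem?_eq_none (by simp)
    rcases hb with ⟨i, _, _, _, _, _, h3, _⟩ | ⟨i, _, _, _, _, _, h3, _⟩ <;>
      · rw [hnone i] at h3; cases h3
  · intro hne
    by_contra hadj
    apply hne
    by_cases hvu : Relation.ReflTransGen E v u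
    · have huvr : ¬ Relation.ReflTransGen E u v := by
        intro h2
        rcases Relation.reflTransGen_iff_eq_or_transGen.mp hvu with heq | htg
        · exact huv heq
        · exact h v (Relation.TransGen.trans_left htg h2)
      have hkey := key h (fun hc => hadj hc.symm) huv.symm huvr
      exact ⟨{w | E w u}, fun hu' => h u (Relation.TransGen.single hu'),
        fun hv' => hadj (Or.inr hv'), dsep_symm hkey⟩
    · exact ⟨{w | E w v}, fun hu' => hadj (Or.inl hu'),
        fun hv' => h v (Relation.TransGen.single hv'), key h hadj huv hvu⟩
end

section
/- (V-structure creation by adding a QTL node.) Let G₁ and G₂ be DAGs on a finite vertex set V with the same skeleton, and suppose u → v is an edge of G₁ while v → u is an edge of G₂. Let q ∉ V be a new vertex and form G₁′ and G₂′ on V ∪ {q} by adding to G₁ and G₂, respectively, the single edge q → u. Then (q, u, v) is a v-structure of G₂′ but not of G₁′; in particular G₁′ and G₂′ have the same skeleton but different sets of v-structures. -/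
/-- The extension of a graph `E` on `V` to `V ∪ {q}` (modeled as `Option V`, with the new
vertex `q = none`) obtained by adding the single edge `q → u`. -/
def ExtendQ {V : Type*} (E : V → V → Prop) (u : V) : Option V → Option V → Prop :=
  fun a b => (∃ x y, a = some x ∧ b = some y ∧ E x y) ∨ (a = none ∧ b = some u)

/-- V-structure creation by adding a QTL node: if DAGs `G₁`, `G₂` have the same skeleton,
`u → v` is an edge of `G₁` and `v → u` is an edge of `G₂`, then after adding a new vertex
`q` with the single edge `q → u`, the triple `(q, u, v)` is a v-structure of `G₂′` but not
of `G₁′`; in particular `G₁′` and `G₂′` have the same skeleton but different sets of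
v-structures. -/
theorem stmt_13 {V : Type*} (E₁ E₂ : V → V → Prop)
    (h₁ : IsDAG E₁) (h₂ : IsDAG E₂)
    (hskel : ∀ a b, Adj E₁ a b ↔ Adj E₂ a b)
    (u v : V) (h1 : E₁ u v) (h2 : E₂ v u) :
    VStruct (ExtendQ E₂ u) none (some u) (some v) ∧
    ¬ VStruct (ExtendQ E₁ u) none (some u) (some v) ∧
    (∀ a b, Adj (ExtendQ E₁ u) a b ↔ Adj (ExtendQ E₂ u) a b) ∧
    ¬ (∀ a m b, VStruct (ExtendQ E₁ u) a m b ↔ VStruct (ExtendQ E₂ u) a m b) := by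
  have huv : u ≠ v := fun h => h₂ v (Relation.TransGen.single (h ▸ h2))
  have hvu1 : ¬ E₁ v u := fun h => h₁ u (Relation.TransGen.head h1 (Relation.TransGen.single h))
  have hv2 : VStruct (ExtendQ E₂ u) none (some u) (some v) := by
    refine ⟨Or.inr ⟨rfl, rfl⟩, Or.inl ⟨v, u, rfl, rfl, h2⟩, by simp, ?_⟩
    rintro ((⟨x, y, hx, hy, _⟩ | ⟨_, hy⟩) | (⟨x, y, _, hy2, _⟩ | ⟨h, _⟩))
    · exact nomatch hx
    · exact huv (Option.some_injective _ hy).symm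
    · exact nomatch hy2
    · exact nomatch h
  have hn1 : ¬ VStruct (ExtendQ E₁ u) none (some u) (some v) := by
    rintro ⟨_, (⟨x, y, hx, hy, hxy⟩ | ⟨h, _⟩), _, _⟩
    · obtain rfl := Option.some_injective _ hx
      obtain rfl := Option.some_injective _ hy
      exact hvu1 hxy
    · exact nomatch h
  have key : ∀ a b, ExtendQ E₁ u a b → Adj (ExtendQ E₂ u) a b := by
    rintro a b (⟨x, y, hx, hy, hxy⟩ | h)
    · subst hx; subst hy
      rcases (hskel x y).mp (Or.inl hxy) with h | h
      · exact Or.inl (Or.inl ⟨x, y, rfl, rfl, h⟩)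
      · exact Or.inr (Or.inl ⟨y, x, rfl, rfl, h⟩)
    · exact Or.inl (Or.inr h)
  have key' : ∀ a b, ExtendQ E₂ u a b → Adj (ExtendQ E₁ u) a b := by
    rintro a b (⟨x, y, hx, hy, hxy⟩ | h)
    · subst hx; subst hy
      rcases (hskel x y).mpr (Or.inl hxy) with h | h
      · exact Or.inl (Or.inl ⟨x, y, rfl, rfl, h⟩)
      · exact Or.inr (Or.inl ⟨y, x, rfl, rfl, h⟩)
    · exact Or.inl (Or.inr h)
  refine ⟨hv2, hn1, ?_, fun h => hn1 ((h _ _ _).mpr hv2)⟩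
  intro a b
  constructor
  · rintro (h | h)
    · exact key a b h
    · exact (key b a h).symm
  · rintro (h | h)
    · exact key' a b h
    · exact (key' b a h).symm
end

section
/- (Result 2.) Let 𝒢 be a class of Markov-equivalent DAGs on a finite vertex set V, and let G₁ ≠ G₂ be two distinct members of 𝒢. For each unordered pair {u, v} of vertices adjacent in the common skeleton, let q_{uv} be a distinct new vertex not in V and fix one endpoint r(u, v) ∈ {u, v}. Form the extended graphs G₁ᴱ and G₂ᴱ on V together with all the new vertices by adding to each Gᵢ, for every adjacent pair {u, v}, the single edge q_{uv} → r(u, v). Then G₁ᴱ and G₂ᴱ are not Markov equivalent. -/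
/-- The extended graph of Result 2: to a graph `E` on `V` we add, for every unordered pair
`{x, y}` adjacent in the reference skeleton `base`, a new vertex `q_{xy}` (modeled as
`Sum.inr s(x, y) : V ⊕ Sym2 V`) together with the single edge `q_{xy} → r x y`, where
`r x y ∈ {x, y}` is a fixed symmetric choice of endpoint. -/
def ExtendAll {V : Type*} (E base : V → V → Prop) (r : V → V → V) :
    (V ⊕ Sym2 V) → (V ⊕ Sym2 V) → Prop :=
  fun a b =>
    (∃ x y, a = Sum.inl x ∧ b = Sum.inl y ∧ E x y) ∨
    (∃ x y, Adj base x y ∧ a = Sum.inr s(x, y) ∧ b = Sum.inl (r x y))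

section Aux

variable {V : Type*}

lemma dag_irrefl {F : V → V → Prop} (h : IsDAG F) {x : V} : ¬ F x x :=
  fun hx => h x (Relation.TransGen.single hx)

lemma dag_ne {F : V → V → Prop} (h : IsDAG F) {x y : V} (hxy : F x y) : x ≠ y :=
  fun e => dag_irrefl h (e ▸ hxy)

/-- Path dichotomy: a path starting with a forward edge is either a fully directed
path, or contains a collider reachable from its first vertex. -/
lemma dicho {α : Type*} (R : α → α → Prop) :
    ∀ (l : List α) (a b : α), R a b → List.Chain' (Adj R) (b :: l) →
      (∀ z, (b :: l).getLast? = some z → Relation.TransGen R a z) ∨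
      (∃ i a' m b', (a :: b :: l)[i]? = some a' ∧ (a :: b :: l)[i+1]? = some m ∧
        (a :: b :: l)[i+2]? = some b' ∧ R a' m ∧ R b' m ∧ Relation.TransGen R a m) := by
  intro l
  induction l with
  | nil =>
    intro a b hab _
    left; intro z hz
    simp only [List.getLast?_singleton, Option.some_inj] at hz
    exact hz ▸ Relation.TransGen.single hab
  | cons c l' ih =>
    intro a b hab hch
    simp only [List.Chain', List.isChain_cons_cons] at hch
    obtain ⟨hbc, hch'⟩ := hch
    by_cases h : R b c
    · rcases ih b c h hch' with hL | ⟨i, a', m, b', h0, h1, h2, ham, hbm, hr⟩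
      · left; intro z hz
        rw [List.getLast?_cons_cons] at hz
        exact (Relation.TransGen.single hab).trans (hL z hz)
      · right
        exact ⟨i+1, a', m, b', by simpa using h0, by simpa using h1, by simpa using h2,
          ham, hbm, (Relation.TransGen.single hab).trans hr⟩
    · right
      have hcb : R c b := hbc.resolve_left h
      exact ⟨0, a, b, c, by simp, by simp, by simp, hab, hcb, Relation.TransGen.single hab⟩

/-- A vertex is d-separated from any non-adjacent non-descendant by its parents. -/
lemma localMarkov (F : V → V → Prop) (hDAG : IsDAG F) {u v : V} (hne : u ≠ v)
    (hnadj : ¬ Adj F u v) (hndesc : ¬ Relation.TransGen F u v) :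
    DSep F {u} {v} {w | F w u} := by
  rintro p ⟨hnd, hch⟩ ⟨x, hx, hhead⟩ ⟨y, hy, hlast⟩
  rw [Set.mem_singleton_iff] at hx hy
  rw [hx] at hhead; rw [hy] at hlast
  cases p with
  | nil => simp at hhead
  | cons a rest =>
    have ha : u = a := by
      rw [List.head?_cons, Option.some_inj] at hhead; exact hhead.symm
    subst ha
    cases rest with
    | nil =>
      simp only [List.getLast?_singleton, Option.some_inj] at hlast
      exact absurd hlast hne
    | cons w rest' =>
      simp only [List.Chain', List.isChain_cons_cons] at hch
      obtain ⟨huw, hch'⟩ := hch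
      by_cases hf : F u w
      · rcases dicho F rest' u w hf hch' with hL | ⟨i, a', m, b', h0, h1, h2, ham, hbm, hreach⟩
        · exfalso
          rw [List.getLast?_cons_cons] at hlast
          exact hndesc (hL v hlast)
        · refine Or.inr ⟨i, a', m, b', h0, h1, h2, ham, hbm, fun d hd hdZ => ?_⟩
          exact hDAG u ((hreach.trans (Relation.TransGen.trans_right hd
            (Relation.TransGen.single hdZ))))
      · have hwu : F w u := huw.resolve_left hf
        cases rest' with
        | nil =>
          exfalso
          have hwv : w = v := by simpa using hlast
          exact hnadj (Or.inr (hwv ▸ hwu))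
        | cons b rest'' =>
          exact Or.inl ⟨0, u, w, b, by simp, by simp, by simp, fun h => hf h.1, hwu⟩

/-- Adjacent vertices are never d-separated. -/
lemma notDSepAdj (F : V → V → Prop) {u v : V} (hadj : Adj F u v) (hne : u ≠ v)
    (Z : Set V) : ¬ DSep F {u} {v} Z := by
  intro h
  have hb := h [u, v] ⟨by simp [hne], by simp [List.Chain', List.isChain_cons_cons, hadj]⟩
    ⟨u, rfl, rfl⟩ ⟨v, rfl, by simp⟩
  have hnone : ∀ i : ℕ, ([u, v] : List V)[i+2]? = none :=
    fun i => List.getElem?_eq_none (by simp)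
  rcases hb with ⟨i, a, m, b, _, _, h2, _⟩ | ⟨i, a, m, b, _, _, h2, _⟩ <;>
    rw [hnone i] at h2 <;> exact absurd h2 (by simp)

/-- Markov equivalent DAGs have the same skeleton. -/
lemma skel (F G : V → V → Prop) (hF : IsDAG F) (hG : IsDAG G)
    (hME : MarkovEquiv F G) {u v : V} (h : F u v) : Adj G u v := by
  by_contra hnadj
  have hne : u ≠ v := dag_ne hF h
  by_cases hd : Relation.TransGen G u v
  · have hd' : ¬ Relation.TransGen G v u := fun h' => hG u (hd.trans h')
    have hnadj' : ¬ Adj G v u := fun h' => hnadj h'.symm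
    have hs := localMarkov G hG hne.symm hnadj' hd'
    have d1 : Disjoint ({v} : Set V) {u} := Set.disjoint_singleton.mpr hne.symm
    have d2 : Disjoint ({v} : Set V) {w | G w v} := by
      rw [Set.disjoint_left]
      rintro x hx hxZ
      rw [Set.mem_singleton_iff] at hx
      subst hx
      exact dag_irrefl hG hxZ
    have d3 : Disjoint ({u} : Set V) {w | G w v} := by
      rw [Set.disjoint_left]
      rintro x hx hxZ
      rw [Set.mem_singleton_iff] at hx
      subst hx
      exact hnadj (Or.inl hxZ)
    have := (hME {v} {u} {w | G w v} d1 d2 d3).mpr hs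
    exact notDSepAdj F (Or.inr h) hne.symm _ this
  · have hnadj' : ¬ Adj G u v := hnadj
    have hs := localMarkov G hG hne hnadj' hd
    have d1 : Disjoint ({u} : Set V) {v} := Set.disjoint_singleton.mpr hne
    have d2 : Disjoint ({u} : Set V) {w | G w u} := by
      rw [Set.disjoint_left]
      rintro x hx hxZ
      rw [Set.mem_singleton_iff] at hx
      subst hx
      exact dag_irrefl hG hxZ
    have d3 : Disjoint ({v} : Set V) {w | G w u} := by
      rw [Set.disjoint_left]
      rintro x hx hxZ
      rw [Set.mem_singleton_iff] at hx
      subst hx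
      exact hnadj (Or.inr hxZ)
    have := (hME {u} {v} {w | G w u} d1 d2 d3).mpr hs
    exact notDSepAdj F (Or.inl h) hne _ this

/-- The unique successor of a QTL vertex. -/
lemma qtl_succ (E₁ F : V → V → Prop) (r : V → V → V) (hrsymm : ∀ x y, r x y = r y x)
    {u v : V} (hr : r u v = u) :
    ∀ c, ExtendAll F E₁ r (Sum.inr s(u, v)) c → c = Sum.inl u := by
  rintro c (⟨x, y, hax, _, _⟩ | ⟨x, y, _, ha, hb⟩)
  · exact absurd hax (by simp)
  · rw [Sum.inr.injEq] at ha
    rcases Sym2.eq_iff.mp ha with ⟨hx, hy⟩ | ⟨hx, hy⟩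
    · rw [hb, ← hx, ← hy, hr]
    · rw [hb, ← hx, ← hy, hrsymm v u, hr]

/-- Reachability among original vertices in the extended graph reduces to `F`. -/
lemma inl_rtg (E₁ F : V → V → Prop) (r : V → V → V) {c : V ⊕ Sym2 V} {vb : V}
    (h : Relation.ReflTransGen (ExtendAll F E₁ r) c (Sum.inl vb)) :
    ∀ a, c = Sum.inl a → Relation.ReflTransGen F a vb := by
  induction h using Relation.ReflTransGen.head_induction_on with
  | refl =>
    intro a ha
    rw [Sum.inl.injEq] at ha
    exact ha ▸ Relation.ReflTransGen.refl
  | head h' h ih =>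
    intro a ha
    subst ha
    rcases h' with ⟨x, y, hax, hby, hxy⟩ | ⟨x, y, _, hax, _⟩
    · rw [Sum.inl.injEq] at hax
      subst hax
      exact Relation.ReflTransGen.head hxy (ih y hby)
    · exact absurd hax (by simp)

/-- In the graph where `q → u ← v`, the QTL `q` is d-separated from `v` by `∅`. -/
lemma lemB (E₁ : V → V → Prop) (r : V → V → V) (hrsymm : ∀ x y, r x y = r y x)
    (F : V → V → Prop) (hDAG : IsDAG F) {u v : V}
    (hr : r u v = u) (hF : F v u) :
    DSep (ExtendAll F E₁ r) {Sum.inr s(u, v)} {Sum.inl v} ∅ := by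
  rintro p ⟨hnd, hch⟩ ⟨x, hx, hhead⟩ ⟨y, hy, hlast⟩
  rw [Set.mem_singleton_iff] at hx hy
  rw [hx] at hhead; rw [hy] at hlast
  cases p with
  | nil => simp at hhead
  | cons a rest =>
    rw [List.head?_cons, Option.some_inj] at hhead
    subst hhead
    cases rest with
    | nil => simp at hlast
    | cons w rest' =>
      simp only [List.Chain', List.isChain_cons_cons] at hch
      obtain ⟨hqw, hch'⟩ := hch
      have hqw' : ExtendAll F E₁ r (Sum.inr s(u, v)) w := by
        rcases hqw with h | h
        · exact h
        · exfalso
          rcases h with ⟨x, y, _, hb, _⟩ | ⟨x, y, _, _, hb⟩ <;> exact absurd hb (by simp)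
      have hw : w = Sum.inl u := qtl_succ E₁ F r hrsymm hr w hqw'
      subst hw
      rcases dicho (ExtendAll F E₁ r) rest' (Sum.inr s(u, v)) (Sum.inl u) hqw' hch' with
        hL | ⟨i, a', m, b', h0, h1, h2, ham, hbm, _⟩
      · exfalso
        rw [List.getLast?_cons_cons] at hlast
        have hTG := hL _ hlast
        obtain ⟨c, hqc, hcv⟩ := Relation.TransGen.head'_iff.mp hTG
        have hc : c = Sum.inl u := qtl_succ E₁ F r hrsymm hr c hqc
        subst hc
        have hRTG : Relation.ReflTransGen F u v := inl_rtg E₁ F r hcv u rfl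
        exact hDAG v (Relation.TransGen.head' hF hRTG)
      · exact Or.inr ⟨i, a', m, b', h0, h1, h2, ham, hbm,
          fun d _ hd => Set.notMem_empty d hd⟩

/-- In the graph where `q → u → v`, the QTL `q` is not d-separated from `v` by `∅`. -/
lemma lemA (E₁ : V → V → Prop) (r : V → V → V)
    (F : V → V → Prop) (hDAG : IsDAG F) {u v : V}
    (hadj : Adj E₁ u v) (hr : r u v = u) (hF : F u v) :
    ¬ DSep (ExtendAll F E₁ r) {Sum.inr s(u, v)} {Sum.inl v} ∅ := by
  intro h
  have hne : u ≠ v := dag_ne hDAG hF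
  have hb := h [Sum.inr s(u, v), Sum.inl u, Sum.inl v]
    ⟨by simp [hne], by
      simp only [List.Chain', List.isChain_cons_cons, List.isChain_singleton, and_true]
      exact ⟨Or.inl (Or.inr ⟨u, v, hadj, rfl, by rw [hr]⟩), Or.inl (Or.inl ⟨u, v, rfl, rfl, hF⟩)⟩⟩
    ⟨Sum.inr s(u, v), rfl, rfl⟩ ⟨Sum.inl v, rfl, by simp⟩
  rcases hb with ⟨i, a, m, b, _, _, _, _, hmem⟩ | ⟨i, a, m, b, h0, h1, h2, ham, hbm, _⟩
  · exact Set.notMem_empty m hmem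
  · cases i with
    | zero =>
      have hm : m = Sum.inl u := Option.some_inj.mp (h1.symm.trans (by simp))
      have hbb : b = Sum.inl v := Option.some_inj.mp (h2.symm.trans (by simp))
      subst hm; subst hbb
      rcases hbm with ⟨x, y, hax, hby, hxy⟩ | ⟨x, y, _, hax, _⟩
      · rw [Sum.inl.injEq] at hax hby
        subst hax; subst hby
        exact hDAG u ((Relation.TransGen.single hF).tail hxy)
      · exact absurd hax (by simp)
    | succ n =>
      have : ([Sum.inr s(u, v), Sum.inl u, Sum.inl v] : List (V ⊕ Sym2 V))[n+3]? = none :=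
        List.getElem?_eq_none (by simp)
      rw [this] at h2
      exact absurd h2 (by simp)

/-- Core argument: an oppositely oriented common edge makes the extensions inequivalent. -/
lemma core (E₁ E₂ : V → V → Prop) (h₁ : IsDAG E₁) (h₂ : IsDAG E₂)
    (r : V → V → V) (hrmem : ∀ x y, r x y = x ∨ r x y = y)
    (hrsymm : ∀ x y, r x y = r y x) {u v : V}
    (e1 : E₁ u v) (e2 : E₂ v u) :
    ¬ MarkovEquiv (ExtendAll E₁ E₁ r) (ExtendAll E₂ E₁ r) := by
  intro hME'
  rcases hrmem u v with hr | hr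
  · have hA := lemA E₁ r E₁ h₁ (Or.inl e1) hr e1
    have hB := lemB E₁ r hrsymm E₂ h₂ hr e2
    exact hA ((hME' {Sum.inr s(u, v)} {Sum.inl v} ∅ (by simp) (by simp) (by simp)).mpr hB)
  · have hr' : r v u = v := (hrsymm v u).trans hr
    have hA := lemA E₁ r E₂ h₂ (Or.inr e1) hr' e2
    have hB := lemB E₁ r hrsymm E₁ h₁ hr' e1
    exact hA ((hME' {Sum.inr s(v, u)} {Sum.inl u} ∅ (by simp) (by simp) (by simp)).mp hB)

end Aux

/-- Result 2: let `G₁ ≠ G₂` be two distinct members of a class of Markov-equivalent DAGs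
on a finite vertex set `V`; for each pair adjacent in the common skeleton add a distinct
new QTL vertex `q_{uv}` with the single edge `q_{uv} → r u v` to one fixed endpoint.
Then the extended graphs are not Markov equivalent. -/
theorem stmt_14 {V : Type*} [Finite V] (E₁ E₂ : V → V → Prop)
    (h₁ : IsDAG E₁) (h₂ : IsDAG E₂)
    (hME : MarkovEquiv E₁ E₂) (hne : E₁ ≠ E₂)
    (r : V → V → V)
    (hrmem : ∀ x y, r x y = x ∨ r x y = y)
    (hrsymm : ∀ x y, r x y = r y x) :
    ¬ MarkovEquiv (ExtendAll E₁ E₁ r) (ExtendAll E₂ E₁ r) := by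
  have hdiff : ∃ u v, ¬ (E₁ u v ↔ E₂ u v) := by
    by_contra hc
    push_neg at hc
    exact hne (funext fun u => funext fun v => propext (hc u v))
  obtain ⟨u, v, hiff⟩ := hdiff
  rcases Classical.em (E₁ u v) with h1 | h1
  · have h2 : ¬ E₂ u v := fun h => hiff (iff_of_true h1 h)
    have h2' : E₂ v u := (skel E₁ E₂ h₁ h₂ hME h1).resolve_left h2
    exact core E₁ E₂ h₁ h₂ r hrmem hrsymm h1 h2'
  · have h2 : E₂ u v := Classical.byContradiction fun h2 => hiff (iff_of_false h1 h2)
    have hMEs : MarkovEquiv E₂ E₁ := fun X Y Z d1 d2 d3 => (hME X Y Z d1 d2 d3).symm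
    have h1' : E₁ v u := (skel E₂ E₁ h₂ h₁ hMEs h2).resolve_left h1
    exact core E₁ E₂ h₁ h₂ r hrmem hrsymm h1' h2
end

section
/- (Distribution equivalence implies Markov equivalence; converse direction of Result 3 for the Gaussian family.) Let G₁ and G₂ be DAGs on Fin T. For a DAG G, let ℳ(G) = { (1 − B)⁻¹ * D * ((1 − B)⁻¹)ᵀ : B : Matrix (Fin T) (Fin T) ℝ with B t v ≠ 0 only if v → t is an edge of G, and D a diagonal matrix with strictly positive diagonal entries }. If ℳ(G₁) = ℳ(G₂), then G₁ and G₂ have the same skeleton and the same set of v-structures. -/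
open Matrix

/-- The set of covariance matrices realizable by Gaussian linear structural equation
models over the DAG with edge relation `E` on `Fin T`: matrices
`(1 - B)⁻¹ * D * ((1 - B)⁻¹)ᵀ` with `B t v ≠ 0` only if `v → t` is an edge of the graph,
and `D` a diagonal matrix with strictly positive diagonal entries. -/
def covSet (T : ℕ) (E : Fin T → Fin T → Prop) : Set (Matrix (Fin T) (Fin T) ℝ) :=
  { S | ∃ (B : Matrix (Fin T) (Fin T) ℝ) (d : Fin T → ℝ),
      (∀ t v, B t v ≠ 0 → E v t) ∧ (∀ t, 0 < d t) ∧
      S = (1 - B)⁻¹ * Matrix.diagonal d * ((1 - B)⁻¹)ᵀ }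

namespace S16

variable {T : ℕ}

/-! ### Triangular matrices with respect to a rank function -/

/-- strictly lower triangular wrt rank function f -/
def SLo (f : Fin T → ℕ) (M : Matrix (Fin T) (Fin T) ℝ) : Prop :=
  ∀ i j, M i j ≠ 0 → f j < f i

/-- unit lower triangular wrt f -/
def LoU (f : Fin T → ℕ) (M : Matrix (Fin T) (Fin T) ℝ) : Prop :=
  (∀ i j, M i j ≠ 0 → f j < f i ∨ j = i) ∧ ∀ i, M i i = 1

lemma SLo.pow {f : Fin T → ℕ} {B : Matrix (Fin T) (Fin T) ℝ} (h : SLo f B) :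
    ∀ n i j, (B ^ n) i j ≠ 0 → (0 < n ∧ n + f j ≤ f i) ∨ (n = 0 ∧ j = i) := by
  intro n
  induction n with
  | zero =>
    intro i j hij
    right
    refine ⟨rfl, ?_⟩
    by_contra hne
    rw [pow_zero, Matrix.one_apply_ne (Ne.symm hne)] at hij
    exact hij rfl
  | succ n ih =>
    intro i j hij
    rw [pow_succ, Matrix.mul_apply] at hij
    obtain ⟨k, -, hk⟩ := Finset.exists_ne_zero_of_sum_ne_zero hij
    have h1 : (B ^ n) i k ≠ 0 := left_ne_zero_of_mul hk
    have h2 : B k j ≠ 0 := right_ne_zero_of_mul hk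
    have hkj := h k j h2
    rcases ih i k h1 with ⟨hpos, hle⟩ | ⟨hn0, rfl⟩
    · exact Or.inl ⟨Nat.succ_pos n, by omega⟩
    · subst hn0
      exact Or.inl ⟨Nat.succ_pos 0, by omega⟩

lemma SLo.pow_eq_zero {f : Fin T → ℕ} {B : Matrix (Fin T) (Fin T) ℝ} (h : SLo f B)
    {N : ℕ} (hN : ∀ x, f x < N) : B ^ N = 0 := by
  ext i j
  by_contra hij
  rcases h.pow N i j hij with ⟨-, hle⟩ | ⟨rfl, -⟩
  · have := hN i; omega
  · have := hN i; omega

lemma SLo.geom {f : Fin T → ℕ} {B : Matrix (Fin T) (Fin T) ℝ} (h : SLo f B)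
    {N : ℕ} (hN : ∀ x, f x < N) :
    (1 - B) * (∑ i ∈ Finset.range N, B ^ i) = 1 ∧
      (∑ i ∈ Finset.range N, B ^ i) * (1 - B) = 1 := by
  have h1 := mul_geom_sum B N
  have h2 := geom_sum_mul B N
  rw [h.pow_eq_zero hN] at h1 h2
  constructor
  · have : (1 - B) * ∑ i ∈ Finset.range N, B ^ i
        = -((B - 1) * ∑ i ∈ Finset.range N, B ^ i) := by noncomm_ring
    rw [this, h1]; noncomm_ring
  · have : (∑ i ∈ Finset.range N, B ^ i) * (1 - B)
        = -((∑ i ∈ Finset.range N, B ^ i) * (B - 1)) := by noncomm_ring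
    rw [this, h2]; noncomm_ring

lemma SLo.inv_eq_geom {f : Fin T → ℕ} {B : Matrix (Fin T) (Fin T) ℝ} (h : SLo f B)
    {N : ℕ} (hN : ∀ x, f x < N) :
    (1 - B)⁻¹ = ∑ i ∈ Finset.range N, B ^ i :=
  Matrix.inv_eq_right_inv (h.geom hN).1

lemma SLo.loU_geom {f : Fin T → ℕ} {B : Matrix (Fin T) (Fin T) ℝ} (h : SLo f B)
    {N : ℕ} (hN : ∀ x, f x < N) : LoU f (∑ i ∈ Finset.range N, B ^ i) := by
  constructor
  · intro i j hij
    rw [Matrix.sum_apply] at hij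
    obtain ⟨n, -, hn⟩ := Finset.exists_ne_zero_of_sum_ne_zero hij
    rcases h.pow n i j hn with ⟨hpos, hle⟩ | ⟨-, rfl⟩
    · exact Or.inl (by omega)
    · exact Or.inr rfl
  · intro i
    have hNpos : 0 < N := lt_of_le_of_lt (Nat.zero_le _) (hN i)
    rw [Matrix.sum_apply]
    rw [Finset.sum_eq_single 0]
    · simp
    · intro n _ hn0
      by_contra hne
      rcases h.pow n i i hne with ⟨-, hle⟩ | ⟨h0, -⟩
      · omega
      · exact hn0 h0
    · intro habs
      exact absurd (Finset.mem_range.mpr hNpos) habs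

lemma LoU.mul {f : Fin T → ℕ} {M N : Matrix (Fin T) (Fin T) ℝ}
    (hM : LoU f M) (hN : LoU f N) : LoU f (M * N) := by
  constructor
  · intro i j hij
    rw [Matrix.mul_apply] at hij
    obtain ⟨k, -, hk⟩ := Finset.exists_ne_zero_of_sum_ne_zero hij
    have h1 := hM.1 i k (left_ne_zero_of_mul hk)
    have h2 := hN.1 k j (right_ne_zero_of_mul hk)
    rcases h1 with h1 | rfl <;> rcases h2 with h2 | rfl
    · exact Or.inl (lt_trans h2 h1)
    · exact Or.inl h1
    · exact Or.inl h2
    · exact Or.inr rfl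
  · intro i
    rw [Matrix.mul_apply, Finset.sum_eq_single i]
    · rw [hM.2, hN.2, one_mul]
    · intro k _ hki
      by_contra hne
      have h1 := hM.1 i k (left_ne_zero_of_mul hne)
      have h2 := hN.1 k i (right_ne_zero_of_mul hne)
      rcases h1 with h1 | h1 <;> rcases h2 with h2 | h2
      · omega
      · rw [h2] at h1; omega
      · rw [h1] at h2; omega
      · exact hki h2.symm
    · simp

lemma SLo.loU_one_sub {f : Fin T → ℕ} {B : Matrix (Fin T) (Fin T) ℝ} (h : SLo f B) :
    LoU f (1 - B) := by
  constructor
  · intro i j hij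
    by_cases hji : j = i
    · exact Or.inr hji
    · left
      apply h i j
      intro hB
      rw [Matrix.sub_apply, Matrix.one_apply_ne (Ne.symm hji), hB, sub_zero] at hij
      exact hij rfl
  · intro i
    have : B i i = 0 := by
      by_contra hne
      exact lt_irrefl _ (h i i hne)
    rw [Matrix.sub_apply, Matrix.one_apply_eq, this, sub_zero]

/-- Uniqueness of the triangular factorization. -/
lemma uniq {N : ℕ} (f : Fin T → ℕ) (hN : ∀ x, f x < N)
    {B₂ B' L' : Matrix (Fin T) (Fin T) ℝ} {d₂ d' : Fin T → ℝ}
    (h₂ : SLo f B₂) (hd' : ∀ i, d' i ≠ 0)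
    (hB' : SLo f B') (hL' : (1 - B') * L' = 1) (hLoU : LoU f L')
    (heq : (1 - B₂)⁻¹ * diagonal d₂ * ((1 - B₂)⁻¹)ᵀ = L' * diagonal d' * L'ᵀ) :
    B₂ = B' := by
  set L₂ := ∑ i ∈ Finset.range N, B₂ ^ i with hL₂def
  obtain ⟨hg1, hg2⟩ := h₂.geom hN
  rw [h₂.inv_eq_geom hN] at heq
  set C := (1 - B₂) * L' with hCdef
  have hcomm : L' * (1 - B') = 1 := mul_eq_one_comm.mp hL'
  have hCinv : C * ((1 - B') * L₂) = 1 := by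
    calc C * ((1 - B') * L₂) = (1 - B₂) * ((L' * (1 - B')) * L₂) := by
          rw [hCdef]; noncomm_ring
      _ = 1 := by rw [hcomm, one_mul, hg1]
  have hCD : C * diagonal d' * Cᵀ = diagonal d₂ := by
    have e1 : C * diagonal d' * Cᵀ
        = (1 - B₂) * (L' * diagonal d' * L'ᵀ) * (1 - B₂)ᵀ := by
      rw [hCdef, Matrix.transpose_mul]; noncomm_ring
    rw [e1, ← heq]
    calc (1 - B₂) * (L₂ * diagonal d₂ * L₂ᵀ) * (1 - B₂)ᵀ
        = ((1 - B₂) * L₂) * diagonal d₂ * ((1 - B₂) * L₂)ᵀ := by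
          rw [Matrix.transpose_mul]; noncomm_ring
      _ = diagonal d₂ := by rw [hg1]; simp
  have hLoUC : LoU f C := (h₂.loU_one_sub).mul hLoU
  have hLoUCinv : LoU f ((1 - B') * L₂) := (hB'.loU_one_sub).mul (h₂.loU_geom hN)
  have hDC : diagonal d' * Cᵀ = ((1 - B') * L₂) * diagonal d₂ := by
    have h3 : ((1 - B') * L₂) * C = 1 := mul_eq_one_comm.mp hCinv
    calc diagonal d' * Cᵀ = (((1 - B') * L₂) * C) * (diagonal d' * Cᵀ) := by
          rw [h3, one_mul]
      _ = ((1 - B') * L₂) * (C * diagonal d' * Cᵀ) := by noncomm_ring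
      _ = ((1 - B') * L₂) * diagonal d₂ := by rw [hCD]
  have hC1 : C = 1 := by
    ext i j
    by_cases hji : j = i
    · subst hji
      rw [hLoUC.2, Matrix.one_apply_eq]
    · rw [Matrix.one_apply_ne (Ne.symm hji)]
      by_cases hlt : f j < f i
      · have := congrFun (congrFun hDC j) i
        rw [Matrix.diagonal_mul, Matrix.mul_diagonal, Matrix.transpose_apply] at this
        have hz : ((1 - B') * L₂) j i = 0 := by
          by_contra hne
          rcases hLoUCinv.1 j i hne with hlt' | rfl
          · omega
          · exact hji rfl
        rw [hz, zero_mul] at this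
        exact (mul_eq_zero.mp this).resolve_left (hd' j)
      · by_contra hne
        rcases hLoUC.1 i j hne with hlt' | rfl
        · exact hlt hlt'
        · exact hji rfl
  have : (1 - B₂) = (1 - B') := by
    calc (1 - B₂) = ((1 - B₂) * L') * (1 - B') := by rw [mul_assoc, hcomm, mul_one]
      _ = 1 * (1 - B') := by rw [← hCdef, hC1]
      _ = 1 - B' := one_mul _
  exact sub_right_injective this

/-! ### Rank function of a DAG -/

open Classical in
/-- number of strict ancestors -/
noncomputable def rk (E : Fin T → Fin T → Prop) (x : Fin T) : ℕ :=
  (Finset.univ.filter (fun z => Relation.TransGen E z x)).card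

lemma rk_lt {E : Fin T → Fin T → Prop} (hE : IsDAG E) {x y : Fin T} (h : E x y) :
    rk E x < rk E y := by
  classical
  unfold rk
  apply Finset.card_lt_card
  constructor
  · intro z hz
    simp only [Finset.mem_filter, Finset.mem_univ, true_and] at hz ⊢
    · exact hz.tail h
  · intro hsub
    have hx : x ∈ Finset.univ.filter (fun z => Relation.TransGen E z y) := by
      simp only [Finset.mem_filter, Finset.mem_univ, true_and]
      exact Relation.TransGen.single h
    have := hsub hx
    simp only [Finset.mem_filter, Finset.mem_univ, true_and] at this
    exact hE x this

lemma rk_bound {E : Fin T → Fin T → Prop} (hE : IsDAG E) (x : Fin T) :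
    rk E x < T := by
  classical
  unfold rk
  have : (Finset.univ.filter (fun z => Relation.TransGen E z x)) ⊂ Finset.univ := by
    constructor
    · exact Finset.filter_subset _ _
    · intro hsub
      have hx := hsub (Finset.mem_univ x)
      simp only [Finset.mem_filter, Finset.mem_univ, true_and] at hx
      exact hE x hx
  have := Finset.card_lt_card this
  simpa using this

/-! ### Elementary matrices -/

/-- elementary matrix -/
noncomputable def E (i j : Fin T) : Matrix (Fin T) (Fin T) ℝ := Matrix.single i j 1

lemma E_apply (i j a b : Fin T) : E i j a b = if i = a ∧ j = b then 1 else 0 := rfl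

lemma E_transpose (i j : Fin T) : (E i j)ᵀ = E j i := by
  ext a b
  simp only [Matrix.transpose_apply, E_apply]
  by_cases h1 : i = b <;> by_cases h2 : j = a <;> simp [h1, h2]

lemma E_mul_same (i j k : Fin T) : E i j * E j k = E i k := by
  unfold E; rw [Matrix.single_mul_single_same]; norm_num

lemma E_mul_ne {j k : Fin T} (h : j ≠ k) (i l : Fin T) : E i j * E k l = 0 :=
  Matrix.single_mul_single_of_ne (c := 1) i j k h 1

lemma diag3_eq (x y m : Fin T) (hxy : x ≠ y) (hxm : x ≠ m) (hym : y ≠ m) (a b c : ℝ) :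
    diagonal (fun z => if z = x then a else if z = y then b else if z = m then c else 1)
      = 1 + (a - 1) • E x x + (b - 1) • E y y + (c - 1) • E m m := by
  ext i j
  simp only [Matrix.add_apply, Matrix.smul_apply, E_apply, Matrix.one_apply,
    Matrix.diagonal_apply, smul_eq_mul]
  by_cases hij : i = j
  · subst hij
    by_cases h1 : i = x
    · subst h1; simp [Ne.symm hxy, Ne.symm hxm]
    · by_cases h2 : i = y
      · subst h2; simp [Ne.symm h1, Ne.symm hym, h1]
      · by_cases h3 : i = m
        · subst h3; simp [Ne.symm h1, Ne.symm h2, h1, h2]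
        · simp [Ne.symm h1, Ne.symm h2, Ne.symm h3, h1, h2, h3]
  · have nx : ¬(x = i ∧ x = j) := fun ⟨p, q⟩ => hij (p.symm.trans q)
    have ny : ¬(y = i ∧ y = j) := fun ⟨p, q⟩ => hij (p.symm.trans q)
    have nm : ¬(m = i ∧ m = j) := fun ⟨p, q⟩ => hij (p.symm.trans q)
    simp [hij, nx, ny, nm]

lemma diag2_eq (x y : Fin T) (hxy : x ≠ y) (a b : ℝ) :
    diagonal (fun z => if z = x then a else if z = y then b else 1)
      = 1 + (a - 1) • E x x + (b - 1) • E y y := by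
  ext i j
  simp only [Matrix.add_apply, Matrix.smul_apply, E_apply, Matrix.one_apply,
    Matrix.diagonal_apply, smul_eq_mul]
  by_cases hij : i = j
  · subst hij
    by_cases h1 : i = x
    · subst h1; simp [Ne.symm hxy]
    · by_cases h2 : i = y
      · subst h2; simp [Ne.symm h1, h1]
      · simp [Ne.symm h1, Ne.symm h2, h1, h2]
  · have nx : ¬(x = i ∧ x = j) := fun ⟨p, q⟩ => hij (p.symm.trans q)
    have ny : ¬(y = i ∧ y = j) := fun ⟨p, q⟩ => hij (p.symm.trans q)
    simp [hij, nx, ny]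

/-! ### SLo / LoU for elementary combinations -/

lemma SLo_add {f : Fin T → ℕ} {M N : Matrix (Fin T) (Fin T) ℝ}
    (hM : SLo f M) (hN : SLo f N) : SLo f (M + N) := by
  intro i j h
  rw [Matrix.add_apply] at h
  by_cases hM0 : M i j = 0
  · exact hN i j (by intro h0; rw [hM0, h0, add_zero] at h; exact h rfl)
  · exact hM i j hM0

lemma SLo_smulE {f : Fin T → ℕ} {a b : Fin T} (c : ℝ) (h : f b < f a) :
    SLo f (c • E a b) := by
  intro i j hij
  rw [Matrix.smul_apply, E_apply] at hij
  by_cases hp : a = i ∧ b = j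
  · obtain ⟨rfl, rfl⟩ := hp
    exact h
  · rw [if_neg hp, smul_zero] at hij
    exact absurd rfl hij

lemma LoU_one_add {f : Fin T → ℕ} {M : Matrix (Fin T) (Fin T) ℝ} (h : SLo f M) :
    LoU f (1 + M) := by
  constructor
  · intro i j hij
    by_cases hji : j = i
    · exact Or.inr hji
    · left
      apply h i j
      intro hM
      rw [Matrix.add_apply, Matrix.one_apply_ne (Ne.symm hji), hM, add_zero] at hij
      exact hij rfl
  · intro i
    have : M i i = 0 := by
      by_contra hne
      exact lt_irrefl _ (h i i hne)
    rw [Matrix.add_apply, Matrix.one_apply_eq, this, add_zero]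

lemma SLo_E {f : Fin T → ℕ} {a b : Fin T} (h : f b < f a) : SLo f (E a b) := by
  intro i j hij
  rw [E_apply] at hij
  by_cases hp : a = i ∧ b = j
  · obtain ⟨rfl, rfl⟩ := hp; exact h
  · rw [if_neg hp] at hij; exact absurd rfl hij

section comp
variable {u v x y m : Fin T}

lemma compAdjInv (huv : u ≠ v) : (1 - E v u) * (1 + E v u) = 1 := by
  simp only [sub_mul, mul_add, one_mul, mul_one, E_mul_ne huv]
  module

lemma compAdjS (huv : u ≠ v) :
    (1 + E v u) * diagonal (fun _ => (1 : ℝ)) * (1 + E v u)ᵀ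
      = 1 + E v u + E u v + E v v := by
  have : diagonal (fun _ : Fin T => (1 : ℝ)) = 1 := Matrix.diagonal_one
  rw [this, mul_one, transpose_add, transpose_one, E_transpose]
  simp only [mul_add, add_mul, one_mul, mul_one, E_mul_same]
  module

lemma compAdjWinv (huv : u ≠ v) :
    (1 - (1/2 : ℝ) • E u v) * (1 + (1/2 : ℝ) • E u v) = 1 := by
  simp only [sub_mul, mul_add, one_mul, mul_one, smul_mul_assoc, mul_smul_comm,
    E_mul_ne huv.symm, smul_zero]
  module

lemma compAdjW (huv : u ≠ v) :
    (1 + (1/2 : ℝ) • E u v) *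
        diagonal (fun z => if z = u then (1/2 : ℝ) else if z = v then 2 else 1) *
        (1 + (1/2 : ℝ) • E u v)ᵀ
      = 1 + E v u + E u v + E v v := by
  rw [diag2_eq u v huv, transpose_add, transpose_smul, transpose_one, E_transpose]
  simp only [mul_add, add_mul, one_mul, mul_one, smul_mul_assoc, mul_smul_comm,
    E_mul_same, E_mul_ne huv, E_mul_ne huv.symm, smul_smul, smul_zero, add_zero, zero_add]
  module

lemma compVSinv (hum : u ≠ m) (hvm : v ≠ m) :
    (1 - (E m u + E m v)) * (1 + (E m u + E m v)) = 1 := by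
  simp only [sub_mul, mul_add, add_mul, one_mul, mul_one,
    E_mul_ne hum, E_mul_ne hvm, add_zero, zero_add]
  module

lemma compVSfact (huv : u ≠ v) (hum : u ≠ m) (hvm : v ≠ m) :
    (1 + (E m u + E m v)) * diagonal (fun _ => (1 : ℝ)) * (1 + (E m u + E m v))ᵀ
      = 1 + E m u + E m v + E u m + E v m + (2 : ℝ) • E m m := by
  have : diagonal (fun _ : Fin T => (1 : ℝ)) = 1 := Matrix.diagonal_one
  rw [this, mul_one, transpose_add, transpose_one, transpose_add, E_transpose, E_transpose]
  simp only [mul_add, add_mul, one_mul, mul_one, E_mul_same,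
    E_mul_ne huv, E_mul_ne huv.symm, add_zero, zero_add]
  module

lemma compAinv (hxy : x ≠ y) (hxm : x ≠ m) (hym : y ≠ m) :
    (1 - ((1/3 : ℝ) • E x m + (1/2 : ℝ) • E y m + (-(1/2) : ℝ) • E y x)) *
      (1 + ((1/3 : ℝ) • E x m + (1/3 : ℝ) • E y m + (-(1/2) : ℝ) • E y x)) = 1 := by
  simp only [sub_mul, mul_add, add_mul, one_mul, mul_one, smul_mul_assoc, mul_smul_comm,
    E_mul_same, E_mul_ne hxy, E_mul_ne hxy.symm, E_mul_ne hxm, E_mul_ne hxm.symm,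
    E_mul_ne hym, E_mul_ne hym.symm, smul_smul, smul_zero, add_zero, zero_add]
  module

lemma compAfact (hxy : x ≠ y) (hxm : x ≠ m) (hym : y ≠ m) :
    (1 + ((1/3 : ℝ) • E x m + (1/3 : ℝ) • E y m + (-(1/2) : ℝ) • E y x)) *
        diagonal (fun z => if z = x then (2/3 : ℝ) else if z = y then 1/2 else
          if z = m then 3 else 1) *
        (1 + ((1/3 : ℝ) • E x m + (1/3 : ℝ) • E y m + (-(1/2) : ℝ) • E y x))ᵀ
      = 1 + E m x + E m y + E x m + E y m + (2 : ℝ) • E m m := by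
  rw [diag3_eq x y m hxy hxm hym]
  simp only [transpose_add, transpose_smul, transpose_one, E_transpose]
  simp only [mul_add, add_mul, one_mul, mul_one, smul_mul_assoc, mul_smul_comm,
    E_mul_same, E_mul_ne hxy, E_mul_ne hxy.symm, E_mul_ne hxm, E_mul_ne hxm.symm,
    E_mul_ne hym, E_mul_ne hym.symm, smul_smul, smul_zero, add_zero, zero_add]
  module

lemma compBinv (hxy : x ≠ y) (hxm : x ≠ m) (hym : y ≠ m) :
    (1 - (E m x + (1/2 : ℝ) • E y m + (-(1/2) : ℝ) • E y x)) *
      (1 + (E m x + (1/2 : ℝ) • E y m)) = 1 := by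
  simp only [sub_mul, mul_add, add_mul, one_mul, mul_one, smul_mul_assoc, mul_smul_comm,
    E_mul_same, E_mul_ne hxy, E_mul_ne hxy.symm, E_mul_ne hxm, E_mul_ne hxm.symm,
    E_mul_ne hym, E_mul_ne hym.symm, smul_smul, smul_zero, add_zero, zero_add]
  module

lemma compBfact (hxy : x ≠ y) (hxm : x ≠ m) (hym : y ≠ m) :
    (1 + (E m x + (1/2 : ℝ) • E y m)) *
        diagonal (fun z => if z = x then (1 : ℝ) else if z = y then 1/2 else
          if z = m then 2 else 1) *
        (1 + (E m x + (1/2 : ℝ) • E y m))ᵀ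
      = 1 + E m x + E m y + E x m + E y m + (2 : ℝ) • E m m := by
  rw [diag3_eq x y m hxy hxm hym]
  simp only [transpose_add, transpose_smul, transpose_one, E_transpose]
  simp only [mul_add, add_mul, one_mul, mul_one, smul_mul_assoc, mul_smul_comm,
    E_mul_same, E_mul_ne hxy, E_mul_ne hxy.symm, E_mul_ne hxm, E_mul_ne hxm.symm,
    E_mul_ne hym, E_mul_ne hym.symm, smul_smul, smul_zero, add_zero, zero_add]
  module

end comp

/-! ### Main lemmas -/

lemma adj_mono {E₁ E₂ : Fin T → Fin T → Prop} (h₁ : IsDAG E₁) (h₂ : IsDAG E₂)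
    (hsub : covSet T E₁ ⊆ covSet T E₂) {u v : Fin T} (hedge : E₁ u v) :
    Adj E₂ u v := by
  have huv : u ≠ v := by rintro rfl; exact h₁ u (.single hedge)
  have hBsupp : ∀ t s, (E v u) t s ≠ 0 → E₁ s t := by
    intro t s h
    rw [E_apply] at h
    by_cases hp : v = t ∧ u = s
    · obtain ⟨rfl, rfl⟩ := hp; exact hedge
    · rw [if_neg hp] at h; exact absurd rfl h
  have hmem : (1 - E v u)⁻¹ * diagonal (fun _ => (1:ℝ)) * ((1 - E v u)⁻¹)ᵀ ∈ covSet T E₁ :=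
    ⟨E v u, fun _ => 1, hBsupp, fun _ => one_pos, rfl⟩
  obtain ⟨B₂, d₂, hsupp₂, hd₂, hSeq⟩ := hsub hmem
  have hinv1 : (1 - E v u)⁻¹ = 1 + E v u := Matrix.inv_eq_right_inv (compAdjInv huv)
  set F : Fin T → ℕ := fun z => 2 * rk E₂ z + (if z = v then 1 else 0) with hFdef
  have hF : ∀ a b, E₂ a b → F a < F b := by
    intro a b h
    have h1 := rk_lt h₂ h
    simp only [hFdef]
    split_ifs <;> omega
  have hFN : ∀ a, F a < 2 * T + 1 := by
    intro a
    have := rk_bound h₂ a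
    simp only [hFdef]
    split_ifs <;> omega
  have hSLo₂ : SLo F B₂ := fun i j h => hF j i (hsupp₂ i j h)
  have hSform : (1 - B₂)⁻¹ * diagonal d₂ * ((1 - B₂)⁻¹)ᵀ
      = (1 + E v u) * diagonal (fun _ => (1:ℝ)) * (1 + E v u)ᵀ := by
    rw [← hinv1]; exact hSeq.symm
  have hFu : F u = 2 * rk E₂ u := by simp [hFdef, huv]
  have hFv : F v = 2 * rk E₂ v + 1 := by simp [hFdef]
  have hFuv : F u ≠ F v := by omega
  rcases lt_or_gt_of_ne hFuv with hlt | hlt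
  · -- B' = E v u
    have hBeq : B₂ = E v u :=
      uniq F hFN hSLo₂ (fun i => one_ne_zero) (SLo_E hlt)
        (compAdjInv huv) (LoU_one_add (SLo_E hlt)) hSform
    have hne : B₂ v u ≠ 0 := by
      rw [hBeq, E_apply]
      simp
    exact Or.inl (hsupp₂ v u hne)
  · -- B' = (1/2) • E u v
    have hd' : ∀ i : Fin T,
        (fun z => if z = u then (1/2:ℝ) else if z = v then 2 else 1) i ≠ 0 := by
      intro i; simp only []; split_ifs <;> norm_num
    have hBeq : B₂ = (1/2 : ℝ) • E u v :=
      uniq F hFN hSLo₂ hd' (SLo_smulE _ hlt)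
        (compAdjWinv huv) (LoU_one_add (SLo_smulE _ hlt))
        (hSform.trans ((compAdjS huv).trans (compAdjW huv).symm))
    have hne : B₂ u v ≠ 0 := by
      rw [hBeq]
      rw [Matrix.smul_apply, E_apply]
      simp
    exact Or.inr (hsupp₂ u v hne)

lemma vs_mono {E₁ E₂ : Fin T → Fin T → Prop} (h₁ : IsDAG E₁) (h₂ : IsDAG E₂)
    (hsub : covSet T E₁ ⊆ covSet T E₂) {u m v : Fin T}
    (hum : E₁ u m) (hvm : E₁ v m) (huv : u ≠ v)
    (hAum : Adj E₂ u m) (hAvm : Adj E₂ v m) (hnA : ¬ Adj E₂ u v) :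
    E₂ u m ∧ E₂ v m := by
  have hum' : u ≠ m := by rintro rfl; exact h₁ u (.single hum)
  have hvm' : v ≠ m := by rintro rfl; exact h₁ v (.single hvm)
  have hBsupp : ∀ t s, (E m u + E m v) t s ≠ 0 → E₁ s t := by
    intro t s h
    rw [Matrix.add_apply, E_apply, E_apply] at h
    by_cases hp : m = t ∧ u = s
    · obtain ⟨rfl, rfl⟩ := hp; exact hum
    · by_cases hq : m = t ∧ v = s
      · obtain ⟨rfl, rfl⟩ := hq; exact hvm
      · rw [if_neg hp, if_neg hq, add_zero] at h; exact absurd rfl h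
  have hmem : (1 - (E m u + E m v))⁻¹ * diagonal (fun _ => (1:ℝ)) *
      ((1 - (E m u + E m v))⁻¹)ᵀ ∈ covSet T E₁ :=
    ⟨E m u + E m v, fun _ => 1, hBsupp, fun _ => one_pos, rfl⟩
  obtain ⟨B₂, d₂, hsupp₂, hd₂, hSeq⟩ := hsub hmem
  have hinv1 : (1 - (E m u + E m v))⁻¹ = 1 + (E m u + E m v) :=
    Matrix.inv_eq_right_inv (compVSinv hum' hvm')
  set F : Fin T → ℕ := fun z => 2 * rk E₂ z + (if z = v then 1 else 0) with hFdef
  have hF : ∀ a b, E₂ a b → F a < F b := by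
    intro a b h
    have h1 := rk_lt h₂ h
    simp only [hFdef]
    split_ifs <;> omega
  have hFN : ∀ a, F a < 2 * T + 1 := by
    intro a
    have := rk_bound h₂ a
    simp only [hFdef]
    split_ifs <;> omega
  have hSLo₂ : SLo F B₂ := fun i j h => hF j i (hsupp₂ i j h)
  have hS0 : (1 - B₂)⁻¹ * diagonal d₂ * ((1 - B₂)⁻¹)ᵀ
      = (1 + (E m u + E m v)) * diagonal (fun _ => (1:ℝ)) * (1 + (E m u + E m v))ᵀ := by
    rw [← hinv1]; exact hSeq.symm
  have hS : (1 - B₂)⁻¹ * diagonal d₂ * ((1 - B₂)⁻¹)ᵀ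
      = 1 + E m u + E m v + E u m + E v m + (2 : ℝ) • E m m :=
    hS0.trans (compVSfact huv hum' hvm')
  have hFu : F u = 2 * rk E₂ u := by simp [hFdef, huv]
  have hFm : F m = 2 * rk E₂ m := by simp [hFdef, Ne.symm hvm']
  have hFv : F v = 2 * rk E₂ v + 1 := by simp [hFdef]
  have hrum : rk E₂ u ≠ rk E₂ m := by
    rcases hAum with h | h
    · exact (rk_lt h₂ h).ne
    · exact (rk_lt h₂ h).ne'
  have hFum : F u ≠ F m := by omega
  have hFvm : F v ≠ F m := by omega
  have hFuv : F u ≠ F v := by omega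
  rcases lt_or_gt_of_ne hFum with hum1 | hum1 <;> rcases lt_or_gt_of_ne hFvm with hvm1 | hvm1
  · -- F u < F m, F v < F m : genuine v-structure
    have hBeq : B₂ = E m u + E m v :=
      uniq F hFN hSLo₂ (fun i => one_ne_zero)
        (SLo_add (SLo_E hum1) (SLo_E hvm1))
        (compVSinv hum' hvm')
        (LoU_one_add (SLo_add (SLo_E hum1) (SLo_E hvm1))) hS0
    constructor
    · apply hsupp₂ m u
      rw [hBeq, Matrix.add_apply, E_apply, E_apply]
      have : ¬(m = m ∧ v = u) := fun ⟨_, q⟩ => huv q.symm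
      norm_num [this, Ne.symm huv]
    · apply hsupp₂ m v
      rw [hBeq, Matrix.add_apply, E_apply, E_apply]
      have : ¬(m = m ∧ u = v) := fun ⟨_, q⟩ => huv q
      norm_num [this, huv]
  · -- F u < F m, F m < F v : order u, m, v; compB with (x,y) = (u,v)
    exfalso
    have hd' : ∀ i : Fin T,
        (fun z => if z = u then (1:ℝ) else if z = v then 1/2 else if z = m then 2 else 1) i ≠ 0 := by
      intro i; simp only []; split_ifs <;> norm_num
    have huv1 : F u < F v := lt_trans hum1 hvm1
    have hSLoB : SLo F (E m u + (1/2 : ℝ) • E v m + (-(1/2) : ℝ) • E v u) :=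
      SLo_add (SLo_add (SLo_E hum1) (SLo_smulE _ hvm1)) (SLo_smulE _ huv1)
    have hBeq : B₂ = E m u + (1/2 : ℝ) • E v m + (-(1/2) : ℝ) • E v u :=
      uniq F hFN hSLo₂ hd' hSLoB
        (compBinv huv hum' hvm')
        (LoU_one_add (SLo_add (SLo_E hum1) (SLo_smulE _ hvm1)))
        (hS.trans (compBfact huv hum' hvm').symm)
    have hne : B₂ v u ≠ 0 := by
      rw [hBeq, Matrix.add_apply, Matrix.add_apply, Matrix.smul_apply, Matrix.smul_apply,
        E_apply, E_apply, E_apply]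
      have h1 : ¬(m = v ∧ u = u) := fun ⟨p, _⟩ => hvm' p.symm
      have h2 : ¬(v = v ∧ m = u) := fun ⟨_, q⟩ => hum' q.symm
      norm_num [h1, h2, Ne.symm hvm', Ne.symm hum', huv, Ne.symm huv]
    exact hnA (Or.inl (hsupp₂ v u hne))
  · -- F m < F u, F v < F m : order v, m, u; compB with (x,y) = (v,u)
    exfalso
    have hd' : ∀ i : Fin T,
        (fun z => if z = v then (1:ℝ) else if z = u then 1/2 else if z = m then 2 else 1) i ≠ 0 := by
      intro i; simp only []; split_ifs <;> norm_num
    have hvu1 : F v < F u := lt_trans hvm1 hum1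
    have hSLoB : SLo F (E m v + (1/2 : ℝ) • E u m + (-(1/2) : ℝ) • E u v) :=
      SLo_add (SLo_add (SLo_E hvm1) (SLo_smulE _ hum1)) (SLo_smulE _ hvu1)
    have hswap : (1 : Matrix (Fin T) (Fin T) ℝ) + E m u + E m v + E u m + E v m + (2 : ℝ) • E m m
        = 1 + E m v + E m u + E v m + E u m + (2 : ℝ) • E m m := by abel
    have hBeq : B₂ = E m v + (1/2 : ℝ) • E u m + (-(1/2) : ℝ) • E u v :=
      uniq F hFN hSLo₂ hd' hSLoB
        (compBinv huv.symm hvm' hum')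
        (LoU_one_add (SLo_add (SLo_E hvm1) (SLo_smulE _ hum1)))
        ((hS.trans hswap).trans (compBfact huv.symm hvm' hum').symm)
    have hne : B₂ u v ≠ 0 := by
      rw [hBeq, Matrix.add_apply, Matrix.add_apply, Matrix.smul_apply, Matrix.smul_apply,
        E_apply, E_apply, E_apply]
      have h1 : ¬(m = u ∧ v = v) := fun ⟨p, _⟩ => hum' p.symm
      have h2 : ¬(u = u ∧ m = v) := fun ⟨_, q⟩ => hvm' q.symm
      norm_num [h1, h2, Ne.symm hvm', Ne.symm hum', huv, Ne.symm huv]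
    exact hnA (Or.inr (hsupp₂ u v hne))
  · -- F m < F u, F m < F v : m first; compA
    exfalso
    rcases lt_or_gt_of_ne hFuv with huv1 | huv1
    · -- order m, u, v : compA with (x,y) = (u,v)
      have hd' : ∀ i : Fin T,
          (fun z => if z = u then (2/3:ℝ) else if z = v then 1/2 else if z = m then 3 else 1) i ≠ 0 := by
        intro i; simp only []; split_ifs <;> norm_num
      have hSLoB : SLo F ((1/3 : ℝ) • E u m + (1/2 : ℝ) • E v m + (-(1/2) : ℝ) • E v u) :=
        SLo_add (SLo_add (SLo_smulE _ hum1) (SLo_smulE _ hvm1)) (SLo_smulE _ huv1)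
      have hBeq : B₂ = (1/3 : ℝ) • E u m + (1/2 : ℝ) • E v m + (-(1/2) : ℝ) • E v u :=
        uniq F hFN hSLo₂ hd' hSLoB
          (compAinv huv hum' hvm')
          (LoU_one_add (SLo_add (SLo_add (SLo_smulE _ hum1) (SLo_smulE _ hvm1)) (SLo_smulE _ huv1)))
          (hS.trans (compAfact huv hum' hvm').symm)
      have hne : B₂ v u ≠ 0 := by
        rw [hBeq, Matrix.add_apply, Matrix.add_apply, Matrix.smul_apply, Matrix.smul_apply,
          Matrix.smul_apply, E_apply, E_apply, E_apply]
        have h1 : ¬(u = v ∧ m = u) := fun ⟨p, _⟩ => huv p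
        have h2 : ¬(v = v ∧ m = u) := fun ⟨_, q⟩ => hum' q.symm
        norm_num [h1, h2, Ne.symm hvm', Ne.symm hum', huv, Ne.symm huv]
      exact hnA (Or.inl (hsupp₂ v u hne))
    · -- order m, v, u : compA with (x,y) = (v,u)
      have hd' : ∀ i : Fin T,
          (fun z => if z = v then (2/3:ℝ) else if z = u then 1/2 else if z = m then 3 else 1) i ≠ 0 := by
        intro i; simp only []; split_ifs <;> norm_num
      have hSLoB : SLo F ((1/3 : ℝ) • E v m + (1/2 : ℝ) • E u m + (-(1/2) : ℝ) • E u v) :=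
        SLo_add (SLo_add (SLo_smulE _ hvm1) (SLo_smulE _ hum1)) (SLo_smulE _ huv1)
      have hswap : (1 : Matrix (Fin T) (Fin T) ℝ) + E m u + E m v + E u m + E v m + (2 : ℝ) • E m m
          = 1 + E m v + E m u + E v m + E u m + (2 : ℝ) • E m m := by abel
      have hBeq : B₂ = (1/3 : ℝ) • E v m + (1/2 : ℝ) • E u m + (-(1/2) : ℝ) • E u v :=
        uniq F hFN hSLo₂ hd' hSLoB
          (compAinv huv.symm hvm' hum')
          (LoU_one_add (SLo_add (SLo_add (SLo_smulE _ hvm1) (SLo_smulE _ hum1)) (SLo_smulE _ huv1)))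
          ((hS.trans hswap).trans (compAfact huv.symm hvm' hum').symm)
      have hne : B₂ u v ≠ 0 := by
        rw [hBeq, Matrix.add_apply, Matrix.add_apply, Matrix.smul_apply, Matrix.smul_apply,
          Matrix.smul_apply, E_apply, E_apply, E_apply]
        have h1 : ¬(v = u ∧ m = v) := fun ⟨p, _⟩ => huv p.symm
        have h2 : ¬(u = u ∧ m = v) := fun ⟨_, q⟩ => hvm' q.symm
        norm_num [h1, h2, Ne.symm hvm', Ne.symm hum', huv, Ne.symm huv]
      exact hnA (Or.inr (hsupp₂ u v hne))


end S16

/-- Distribution equivalence implies Markov equivalence (converse direction of Result 3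
for the Gaussian family): if two DAGs on `Fin T` realize the same set of covariance
matrices, then they have the same skeleton and the same set of v-structures. -/
theorem stmt_16 (T : ℕ) (E₁ E₂ : Fin T → Fin T → Prop)
    (h₁ : IsDAG E₁) (h₂ : IsDAG E₂)
    (hcov : covSet T E₁ = covSet T E₂) :
    (∀ u v, Adj E₁ u v ↔ Adj E₂ u v) ∧
      (∀ u m v, VStruct E₁ u m v ↔ VStruct E₂ u m v) := by
  have hsub₁ : covSet T E₁ ⊆ covSet T E₂ := le_of_eq hcov
  have hsub₂ : covSet T E₂ ⊆ covSet T E₁ := le_of_eq hcov.symm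
  have hskel : ∀ u v, Adj E₁ u v ↔ Adj E₂ u v := by
    intro u v
    constructor
    · rintro (h | h)
      · exact S16.adj_mono h₁ h₂ hsub₁ h
      · rcases S16.adj_mono h₁ h₂ hsub₁ h with h' | h'
        · exact Or.inr h'
        · exact Or.inl h'
    · rintro (h | h)
      · exact S16.adj_mono h₂ h₁ hsub₂ h
      · rcases S16.adj_mono h₂ h₁ hsub₂ h with h' | h'
        · exact Or.inr h'
        · exact Or.inl h'
  refine ⟨hskel, ?_⟩
  intro u m v
  constructor
  · rintro ⟨hum, hvm, hne, hnadj⟩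
    have hnadj₂ : ¬ Adj E₂ u v := fun h => hnadj ((hskel u v).mpr h)
    have hAum := (hskel u m).mp (Or.inl hum)
    have hAvm := (hskel v m).mp (Or.inl hvm)
    obtain ⟨hx, hy⟩ := S16.vs_mono h₁ h₂ hsub₁ hum hvm hne hAum hAvm hnadj₂
    exact ⟨hx, hy, hne, hnadj₂⟩
  · rintro ⟨hum, hvm, hne, hnadj⟩
    have hnadj₁ : ¬ Adj E₁ u v := fun h => hnadj ((hskel u v).mp h)
    have hAum := (hskel u m).mpr (Or.inl hum)
    have hAvm := (hskel v m).mpr (Or.inl hvm)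
    obtain ⟨hx, hy⟩ := S16.vs_mono h₂ h₁ hsub₂ hum hvm hne hAum hAvm hnadj₁
    exact ⟨hx, hy, hne, hnadj₁⟩
end
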